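/- arXiv:2205.14111 — 8 statements merged into one kernel-verified Lean document; each statement's English description precedes it below -/
import Mathlib

section
/- Let Ω ⊂ ℝ^d be a compact convex set. The function ρ(x,y) := max over unit vectors ξ of |√(x·ξ − a_ξ) − √(y·ξ − a_ξ)|, where a_ξ := min over z ∈ Ω of z·ξ, defines a metric on Ω; in particular it satisfies the triangle inequality and ρ(x,y)=0 implies x=y. -/
open scoped InnerProductSpace

/-- `a_ξ = min_{z ∈ Ω} z·ξ`. -/
noncomputable def dubA {d : ℕ} (Ω : Set (EuclideanSpace ℝ (Fin d)))
    (ξ : EuclideanSpace ℝ (Fin d)) : ℝ :=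
  sInf ((fun z => ⟪z, ξ⟫_ℝ) '' Ω)

/-- The Dubiner-type metric
`ρ_Ω(x,y) = max_{ξ ∈ S^{d-1}} |√(x·ξ - a_ξ) - √(y·ξ - a_ξ)|`. -/
noncomputable def dubMetric {d : ℕ} (Ω : Set (EuclideanSpace ℝ (Fin d)))
    (x y : EuclideanSpace ℝ (Fin d)) : ℝ :=
  ⨆ ξ : Metric.sphere (0 : EuclideanSpace ℝ (Fin d)) 1,
    |Real.sqrt (⟪x, (ξ : EuclideanSpace ℝ (Fin d))⟫_ℝ - dubA Ω ξ) -
      Real.sqrt (⟪y, (ξ : EuclideanSpace ℝ (Fin d))⟫_ℝ - dubA Ω ξ)|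

lemma dub_inner_abs_le {d : ℕ} {z ξ : EuclideanSpace ℝ (Fin d)} (hξ : ‖ξ‖ = 1) :
    |⟪z, ξ⟫_ℝ| ≤ ‖z‖ := by
  calc |⟪z, ξ⟫_ℝ| ≤ ‖z‖ * ‖ξ‖ := abs_real_inner_le_norm z ξ
  _ = ‖z‖ := by rw [hξ, mul_one]

lemma dubA_le {d : ℕ} {Ω : Set (EuclideanSpace ℝ (Fin d))} (hΩc : IsCompact Ω)
    {x : EuclideanSpace ℝ (Fin d)} (hx : x ∈ Ω) (ξ : EuclideanSpace ℝ (Fin d)) :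
    dubA Ω ξ ≤ ⟪x, ξ⟫_ℝ := by
  apply csInf_le
  · exact (hΩc.image (continuous_id.inner continuous_const)).bddBelow
  · exact ⟨x, hx, rfl⟩

lemma dubA_ge {d : ℕ} {Ω : Set (EuclideanSpace ℝ (Fin d))}
    {r : ℝ} (hr : ∀ z ∈ Ω, ‖z‖ ≤ r) (hne : Ω.Nonempty)
    {ξ : EuclideanSpace ℝ (Fin d)} (hξ : ‖ξ‖ = 1) :
    -r ≤ dubA Ω ξ := by
  apply le_csInf (hne.image _)
  rintro b ⟨z, hz, rfl⟩
  have := (abs_le.mp (dub_inner_abs_le (z := z) hξ)).1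
  linarith [hr z hz]

lemma dub_sqrt_le {d : ℕ} {Ω : Set (EuclideanSpace ℝ (Fin d))}
    {r : ℝ} (hr : ∀ z ∈ Ω, ‖z‖ ≤ r) (hne : Ω.Nonempty)
    {w : EuclideanSpace ℝ (Fin d)} (hw : w ∈ Ω)
    {ξ : EuclideanSpace ℝ (Fin d)} (hξ : ‖ξ‖ = 1) :
    Real.sqrt (⟪w, ξ⟫_ℝ - dubA Ω ξ) ≤ Real.sqrt (2 * r) := by
  apply Real.sqrt_le_sqrt
  have h1 := (abs_le.mp (dub_inner_abs_le (z := w) hξ)).2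
  have h2 := dubA_ge hr hne hξ
  have := hr w hw
  linarith

lemma dub_bdd {d : ℕ} {Ω : Set (EuclideanSpace ℝ (Fin d))} (hΩc : IsCompact Ω)
    {x y : EuclideanSpace ℝ (Fin d)} (hx : x ∈ Ω) (hy : y ∈ Ω) :
    BddAbove (Set.range fun ξ : Metric.sphere (0 : EuclideanSpace ℝ (Fin d)) 1 =>
      |Real.sqrt (⟪x, (ξ : EuclideanSpace ℝ (Fin d))⟫_ℝ - dubA Ω ξ) -
        Real.sqrt (⟪y, (ξ : EuclideanSpace ℝ (Fin d))⟫_ℝ - dubA Ω ξ)|) := by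
  obtain ⟨r, hr⟩ := hΩc.isBounded.subset_closedBall 0
  have hr' : ∀ z ∈ Ω, ‖z‖ ≤ r := fun z hz => by
    simpa using mem_closedBall_zero_iff.mp (hr hz)
  refine ⟨Real.sqrt (2 * r), ?_⟩
  rintro b ⟨ξ, rfl⟩
  have hξ : ‖(ξ : EuclideanSpace ℝ (Fin d))‖ = 1 := by
    simpa using mem_sphere_zero_iff_norm.mp ξ.2
  rw [abs_sub_le_iff]
  constructor
  · have := dub_sqrt_le hr' ⟨x, hx⟩ hx hξ
    have := Real.sqrt_nonneg (⟪y, (ξ : EuclideanSpace ℝ (Fin d))⟫_ℝ - dubA Ω ξ)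
    linarith
  · have := dub_sqrt_le hr' ⟨x, hx⟩ hy hξ
    have := Real.sqrt_nonneg (⟪x, (ξ : EuclideanSpace ℝ (Fin d))⟫_ℝ - dubA Ω ξ)
    linarith

theorem dubMetric_is_metric {d : ℕ} (hd : 1 ≤ d) (Ω : Set (EuclideanSpace ℝ (Fin d)))
    (hΩc : IsCompact Ω) (hΩconv : Convex ℝ Ω) (hΩint : (interior Ω).Nonempty) :
    ∀ x ∈ Ω, ∀ y ∈ Ω, ∀ z ∈ Ω,
      0 ≤ dubMetric Ω x y ∧
      dubMetric Ω x y = dubMetric Ω y x ∧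
      dubMetric Ω x z ≤ dubMetric Ω x y + dubMetric Ω y z ∧
      (dubMetric Ω x y = 0 → x = y) := by
  intro x hx y hy z hz
  have sphere_ne : Nonempty (Metric.sphere (0 : EuclideanSpace ℝ (Fin d)) 1) := by
    refine ⟨⟨EuclideanSpace.single (⟨0, hd⟩ : Fin d) (1 : ℝ), ?_⟩⟩
    simp [mem_sphere_zero_iff_norm, EuclideanSpace.norm_single]
  refine ⟨?_, ?_, ?_, ?_⟩
  · exact Real.iSup_nonneg fun ξ => abs_nonneg _
  · unfold dubMetric
    congr 1
    ext ξ
    exact abs_sub_comm _ _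
  · apply ciSup_le
    intro ξ
    have h1 : |Real.sqrt (⟪x, (ξ : EuclideanSpace ℝ (Fin d))⟫_ℝ - dubA Ω ξ) -
        Real.sqrt (⟪y, (ξ : EuclideanSpace ℝ (Fin d))⟫_ℝ - dubA Ω ξ)| ≤ dubMetric Ω x y :=
      le_ciSup (dub_bdd hΩc hx hy) ξ
    have h2 : |Real.sqrt (⟪y, (ξ : EuclideanSpace ℝ (Fin d))⟫_ℝ - dubA Ω ξ) -
        Real.sqrt (⟪z, (ξ : EuclideanSpace ℝ (Fin d))⟫_ℝ - dubA Ω ξ)| ≤ dubMetric Ω y z :=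
      le_ciSup (dub_bdd hΩc hy hz) ξ
    calc |Real.sqrt (⟪x, (ξ : EuclideanSpace ℝ (Fin d))⟫_ℝ - dubA Ω ξ) -
        Real.sqrt (⟪z, (ξ : EuclideanSpace ℝ (Fin d))⟫_ℝ - dubA Ω ξ)|
        ≤ |Real.sqrt (⟪x, (ξ : EuclideanSpace ℝ (Fin d))⟫_ℝ - dubA Ω ξ) -
            Real.sqrt (⟪y, (ξ : EuclideanSpace ℝ (Fin d))⟫_ℝ - dubA Ω ξ)| +
          |Real.sqrt (⟪y, (ξ : EuclideanSpace ℝ (Fin d))⟫_ℝ - dubA Ω ξ) -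
            Real.sqrt (⟪z, (ξ : EuclideanSpace ℝ (Fin d))⟫_ℝ - dubA Ω ξ)| := abs_sub_le _ _ _
      _ ≤ dubMetric Ω x y + dubMetric Ω y z := add_le_add h1 h2
  · intro h0
    have key : ∀ ξ : Metric.sphere (0 : EuclideanSpace ℝ (Fin d)) 1,
        ⟪x, (ξ : EuclideanSpace ℝ (Fin d))⟫_ℝ = ⟪y, (ξ : EuclideanSpace ℝ (Fin d))⟫_ℝ := by
      intro ξ
      have hle : |Real.sqrt (⟪x, (ξ : EuclideanSpace ℝ (Fin d))⟫_ℝ - dubA Ω ξ) -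
          Real.sqrt (⟪y, (ξ : EuclideanSpace ℝ (Fin d))⟫_ℝ - dubA Ω ξ)| ≤ 0 := by
        rw [← h0]; exact le_ciSup (dub_bdd hΩc hx hy) ξ
      have heq : Real.sqrt (⟪x, (ξ : EuclideanSpace ℝ (Fin d))⟫_ℝ - dubA Ω ξ) =
          Real.sqrt (⟪y, (ξ : EuclideanSpace ℝ (Fin d))⟫_ℝ - dubA Ω ξ) := by
        have := abs_nonneg (Real.sqrt (⟪x, (ξ : EuclideanSpace ℝ (Fin d))⟫_ℝ - dubA Ω ξ) -
          Real.sqrt (⟪y, (ξ : EuclideanSpace ℝ (Fin d))⟫_ℝ - dubA Ω ξ))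
        have h := le_antisymm hle this
        rwa [abs_eq_zero, sub_eq_zero] at h
      have hxnn : (0:ℝ) ≤ ⟪x, (ξ : EuclideanSpace ℝ (Fin d))⟫_ℝ - dubA Ω ξ :=
        sub_nonneg.mpr (dubA_le hΩc hx _)
      have hynn : (0:ℝ) ≤ ⟪y, (ξ : EuclideanSpace ℝ (Fin d))⟫_ℝ - dubA Ω ξ :=
        sub_nonneg.mpr (dubA_le hΩc hy _)
      have := congrArg (fun t => t ^ 2) heq
      simp only [Real.sq_sqrt hxnn, Real.sq_sqrt hynn] at this
      linarith
    by_contra hne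
    have hxy : x - y ≠ 0 := sub_ne_zero.mpr hne
    have hn : ‖x - y‖ ≠ 0 := norm_ne_zero_iff.mpr hxy
    set ξ₀ : EuclideanSpace ℝ (Fin d) := ‖x - y‖⁻¹ • (x - y) with hξ₀
    have hξ₀s : ξ₀ ∈ Metric.sphere (0 : EuclideanSpace ℝ (Fin d)) 1 := by
      rw [mem_sphere_zero_iff_norm, hξ₀, norm_smul, norm_inv, norm_norm,
        inv_mul_cancel₀ hn]
    have := key ⟨ξ₀, hξ₀s⟩
    have hinner : ⟪x - y, ξ₀⟫_ℝ = 0 := by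
      simp only at this
      rw [inner_sub_left, this, sub_self]
    rw [hξ₀, real_inner_smul_right, real_inner_self_eq_norm_sq] at hinner
    have hpos : 0 < ‖x - y‖ := norm_pos_iff.mpr hxy
    have : 0 < ‖x - y‖⁻¹ * ‖x - y‖ ^ 2 := by positivity
    linarith
end

section
/- Let Ω ⊂ ℝ^d be a convex body with B(0,1) ⊂ Ω ⊂ B(0,d), and let ρ_Ω be the Dubiner-type metric ρ_Ω(x,y) = max_{ξ∈S^{d−1}} |√(x·ξ − a_ξ) − √(y·ξ − a_ξ)|. Then for all x, y ∈ Ω, ‖x − y‖ ≤ 2√(2d) · ρ_Ω(x,y). -/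
open scoped InnerProductSpace

theorem dist_le_dubMetric {d : ℕ} (hd : 1 ≤ d) (Ω : Set (EuclideanSpace ℝ (Fin d)))
    (hΩc : IsCompact Ω) (hΩconv : Convex ℝ Ω) (hΩint : (interior Ω).Nonempty)
    (h1 : Metric.closedBall (0 : EuclideanSpace ℝ (Fin d)) 1 ⊆ Ω)
    (h2 : Ω ⊆ Metric.closedBall (0 : EuclideanSpace ℝ (Fin d)) d) :
    ∀ x ∈ Ω, ∀ y ∈ Ω, ‖x - y‖ ≤ 2 * Real.sqrt (2 * d) * dubMetric Ω x y := by
  intro x hx y hy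
  have h0 : (0 : EuclideanSpace ℝ (Fin d)) ∈ Ω := h1 (by simp)
  -- bounds on inner products with unit vectors
  have hz : ∀ z ∈ Ω, ∀ ξ : EuclideanSpace ℝ (Fin d), ‖ξ‖ = 1 → |⟪z, ξ⟫_ℝ| ≤ (d : ℝ) := by
    intro z hzΩ ξ hξ
    calc |⟪z, ξ⟫_ℝ| ≤ ‖z‖ * ‖ξ‖ := abs_real_inner_le_norm z ξ
      _ = ‖z‖ := by rw [hξ, mul_one]
      _ ≤ (d : ℝ) := by simpa [dist_eq_norm] using h2 hzΩ
  have hbdd : ∀ ξ : EuclideanSpace ℝ (Fin d), ‖ξ‖ = 1 →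
      BddBelow ((fun z => ⟪z, ξ⟫_ℝ) '' Ω) := by
    intro ξ hξ
    refine ⟨-(d : ℝ), ?_⟩
    rintro v ⟨z, hzΩ, rfl⟩
    exact neg_le_of_abs_le (hz z hzΩ ξ hξ)
  have hA_le : ∀ ξ : EuclideanSpace ℝ (Fin d), ‖ξ‖ = 1 → ∀ z ∈ Ω,
      dubA Ω ξ ≤ ⟪z, ξ⟫_ℝ := by
    intro ξ hξ z hzΩ
    exact csInf_le (hbdd ξ hξ) ⟨z, hzΩ, rfl⟩
  have hA_ge : ∀ ξ : EuclideanSpace ℝ (Fin d), ‖ξ‖ = 1 → -(d : ℝ) ≤ dubA Ω ξ := by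
    intro ξ hξ
    refine le_csInf ⟨⟪(0 : EuclideanSpace ℝ (Fin d)), ξ⟫_ℝ, 0, h0, rfl⟩ ?_
    rintro v ⟨z, hzΩ, rfl⟩
    exact neg_le_of_abs_le (hz z hzΩ ξ hξ)
  -- s-values in [0, 2d]
  have hS0 : ∀ ξ : EuclideanSpace ℝ (Fin d), ‖ξ‖ = 1 → ∀ z ∈ Ω,
      0 ≤ ⟪z, ξ⟫_ℝ - dubA Ω ξ := by
    intro ξ hξ z hzΩ
    linarith [hA_le ξ hξ z hzΩ]
  have hS2d : ∀ ξ : EuclideanSpace ℝ (Fin d), ‖ξ‖ = 1 → ∀ z ∈ Ω,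
      ⟪z, ξ⟫_ℝ - dubA Ω ξ ≤ 2 * d := by
    intro ξ hξ z hzΩ
    have := hA_ge ξ hξ
    have h := abs_le.1 (hz z hzΩ ξ hξ)
    linarith [h.2]
  have hsqM : Real.sqrt (2 * d) ≥ 0 := Real.sqrt_nonneg _
  -- sqrt bounds
  have hsqrt_le : ∀ ξ : EuclideanSpace ℝ (Fin d), ‖ξ‖ = 1 → ∀ z ∈ Ω,
      Real.sqrt (⟪z, ξ⟫_ℝ - dubA Ω ξ) ≤ Real.sqrt (2 * d) := by
    intro ξ hξ z hzΩ
    exact Real.sqrt_le_sqrt (hS2d ξ hξ z hzΩ)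
  -- boundedness above of the dubMetric family
  have hfam_bdd : BddAbove (Set.range fun ξ : Metric.sphere (0 : EuclideanSpace ℝ (Fin d)) 1 =>
      |Real.sqrt (⟪x, (ξ : EuclideanSpace ℝ (Fin d))⟫_ℝ - dubA Ω ξ) -
        Real.sqrt (⟪y, (ξ : EuclideanSpace ℝ (Fin d))⟫_ℝ - dubA Ω ξ)|) := by
    refine ⟨Real.sqrt (2 * d), ?_⟩
    rintro v ⟨ξ, rfl⟩
    have hξ : ‖(ξ : EuclideanSpace ℝ (Fin d))‖ = 1 := by
      simpa using mem_sphere_zero_iff_norm.1 ξ.2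
    have h1x := hsqrt_le _ hξ x hx
    have h1y := hsqrt_le _ hξ y hy
    have h0x := Real.sqrt_nonneg (⟪x, (ξ : EuclideanSpace ℝ (Fin d))⟫_ℝ - dubA Ω ξ)
    have h0y := Real.sqrt_nonneg (⟪y, (ξ : EuclideanSpace ℝ (Fin d))⟫_ℝ - dubA Ω ξ)
    rw [abs_sub_le_iff]
    constructor <;> linarith
  have hρ0 : 0 ≤ dubMetric Ω x y := Real.iSup_nonneg fun ξ => abs_nonneg _
  by_cases hxy : x = y
  · subst hxy
    simp only [sub_self, norm_zero]
    positivity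
  -- main case
  have hn : ‖x - y‖ ≠ 0 := by
    simp [sub_eq_zero, hxy]
  have hnpos : 0 < ‖x - y‖ := lt_of_le_of_ne (norm_nonneg _) (Ne.symm hn)
  set ξ₀ : EuclideanSpace ℝ (Fin d) := ‖x - y‖⁻¹ • (x - y) with hξ₀def
  have hξ₀ : ‖ξ₀‖ = 1 := by
    rw [hξ₀def, norm_smul, norm_inv, norm_norm, inv_mul_cancel₀ hn]
  have hmem : ξ₀ ∈ Metric.sphere (0 : EuclideanSpace ℝ (Fin d)) 1 := by
    simpa [mem_sphere_zero_iff_norm] using hξ₀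
  -- inner product computation
  have hinner : ⟪x, ξ₀⟫_ℝ - ⟪y, ξ₀⟫_ℝ = ‖x - y‖ := by
    have : ⟪x - y, ξ₀⟫_ℝ = ‖x - y‖⁻¹ * ⟪x - y, x - y⟫_ℝ := by
      rw [hξ₀def, real_inner_smul_right]
    rw [inner_sub_left] at this
    rw [this, real_inner_self_eq_norm_mul_norm]
    field_simp
  set s : ℝ := ⟪x, ξ₀⟫_ℝ - dubA Ω ξ₀ with hs
  set t : ℝ := ⟪y, ξ₀⟫_ℝ - dubA Ω ξ₀ with ht
  have hst : s - t = ‖x - y‖ := by rw [hs, ht]; linarith [hinner]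
  have hs0 : 0 ≤ s := hS0 ξ₀ hξ₀ x hx
  have ht0 : 0 ≤ t := hS0 ξ₀ hξ₀ y hy
  have hts : t ≤ s := by linarith
  have hsq_mono : Real.sqrt t ≤ Real.sqrt s := Real.sqrt_le_sqrt hts
  have habs : |Real.sqrt s - Real.sqrt t| = Real.sqrt s - Real.sqrt t :=
    abs_of_nonneg (by linarith)
  have hρ : Real.sqrt s - Real.sqrt t ≤ dubMetric Ω x y := by
    have := le_ciSup hfam_bdd (⟨ξ₀, hmem⟩ : Metric.sphere (0 : EuclideanSpace ℝ (Fin d)) 1)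
    rw [dubMetric]
    calc Real.sqrt s - Real.sqrt t = |Real.sqrt s - Real.sqrt t| := habs.symm
      _ ≤ _ := this
  have hsx : Real.sqrt s ≤ Real.sqrt (2 * d) := hsqrt_le ξ₀ hξ₀ x hx
  have hty : Real.sqrt t ≤ Real.sqrt (2 * d) := hsqrt_le ξ₀ hξ₀ y hy
  have hss : Real.sqrt s * Real.sqrt s = s := Real.mul_self_sqrt hs0
  have htt : Real.sqrt t * Real.sqrt t = t := Real.mul_self_sqrt ht0
  have hsqs0 : 0 ≤ Real.sqrt s := Real.sqrt_nonneg s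
  have hsqt0 : 0 ≤ Real.sqrt t := Real.sqrt_nonneg t
  nlinarith [mul_nonneg (sub_nonneg.2 hρ) (add_nonneg hsqs0 hsqt0),
    mul_nonneg hρ0 (by linarith : (0:ℝ) ≤ 2 * Real.sqrt (2 * d) - (Real.sqrt s + Real.sqrt t))]
end

section
/- Let Ω ⊂ ℝ^d be a compact convex set, T : ℝ^d → ℝ^d a nonsingular affine transform with linear part having transpose T*. Then for all x, y ∈ Ω, ρ_{TΩ}(Tx, Ty) ≤ ‖T*‖^{1/2} · ρ_Ω(x, y), where ‖T*‖ is the operator norm and ρ_K is the Dubiner-type metric of the convex set K. -/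
open scoped InnerProductSpace

/-! For `η = T* ξ` the translation part of `T` cancels: `Tz·ξ - a_ξ(TΩ) = z·η - a_η(Ω)`.
Since `a_{tu} = t a_u` for `t ≥ 0`, the `ξ`-term of `ρ_{TΩ}(Tx, Ty)` equals `√‖η‖` times the
`η/‖η‖`-term of `ρ_Ω(x, y)`, and `‖η‖ ≤ ‖T*‖`. -/

open Real Pointwise

theorem Real.abs_sqrt_sub_sqrt_le_sqrt_abs_sub (a b : ℝ) : |√a - √b| ≤ √|a - b| := by
  wlog hba : b ≤ a generalizing a b
  · rw [abs_sub_comm, abs_sub_comm a]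
    exact this b a (le_of_not_ge hba)
  rw [abs_of_nonneg (sub_nonneg.2 (sqrt_le_sqrt hba)), abs_of_nonneg (sub_nonneg.2 hba),
    sub_le_iff_le_add, sqrt_le_left (by positivity)]
  rcases le_total 0 b with hb | hb
  · nlinarith [sq_sqrt hb, sq_sqrt (sub_nonneg.2 hba), sqrt_nonneg b, sqrt_nonneg (a - b)]
  · rw [sqrt_eq_zero_of_nonpos hb, add_zero, sq_sqrt (by linarith)]
    linarith

theorem AffineMap.inner_apply_eq_inner_adjoint_add {E F : Type*}
    [NormedAddCommGroup E] [InnerProductSpace ℝ E] [FiniteDimensional ℝ E]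
    [NormedAddCommGroup F] [InnerProductSpace ℝ F] [FiniteDimensional ℝ F]
    (T : E →ᵃ[ℝ] F) (z : E) (ξ : F) :
    ⟪T z, ξ⟫_ℝ =
      ⟪z, ContinuousLinearMap.adjoint (LinearMap.toContinuousLinearMap T.linear) ξ⟫_ℝ +
        ⟪T 0, ξ⟫_ℝ := by
  rw [ContinuousLinearMap.adjoint_inner_right, ← inner_add_left]
  congr 1
  simpa using T.map_vadd 0 z

section

variable {d : ℕ} (Ω : Set (EuclideanSpace ℝ (Fin d)))

theorem dubA_smul_of_nonneg {t : ℝ} (ht : 0 ≤ t) (u : EuclideanSpace ℝ (Fin d)) :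
    dubA Ω (t • u) = t * dubA Ω u := by
  have : (fun z => ⟪z, t • u⟫_ℝ) '' Ω = t • (fun z => ⟪z, u⟫_ℝ) '' Ω := by
    rw [← Set.image_smul, ← Set.image_comp]
    exact Set.image_congr fun z _ => real_inner_smul_right z u t
  rw [dubA, this, Real.sInf_smul_of_nonneg ht, smul_eq_mul, dubA]

variable {Ω}

theorem dubA_image_affineMap (hΩ : IsCompact Ω) (hne : Ω.Nonempty)
    (T : EuclideanSpace ℝ (Fin d) →ᵃ[ℝ] EuclideanSpace ℝ (Fin d)) (ξ : EuclideanSpace ℝ (Fin d)) :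
    dubA (T '' Ω) ξ =
      dubA Ω (ContinuousLinearMap.adjoint (LinearMap.toContinuousLinearMap T.linear) ξ) +
        ⟪T 0, ξ⟫_ℝ := by
  set η := ContinuousLinearMap.adjoint (LinearMap.toContinuousLinearMap T.linear) ξ
  have hcomp : (fun z => ⟪z, ξ⟫_ℝ) ∘ T = OrderIso.addRight ⟪T 0, ξ⟫_ℝ ∘ fun z => ⟪z, η⟫_ℝ :=
    funext fun z => T.inner_apply_eq_inner_adjoint_add z ξ
  have hbdd : BddBelow ((fun z => ⟪z, η⟫_ℝ) '' Ω) :=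
    (hΩ.image (continuous_id.inner continuous_const)).bddBelow
  rw [dubA, ← Set.image_comp, hcomp, Set.image_comp,
    ← OrderIso.map_csInf' _ (hne.image _) hbdd]
  rfl

theorem dubMetric_nonneg (x y : EuclideanSpace ℝ (Fin d)) : 0 ≤ dubMetric Ω x y :=
  Real.iSup_nonneg fun _ => abs_nonneg _

theorem abs_sqrt_sub_le_dubMetric (x y : EuclideanSpace ℝ (Fin d))
    {u : EuclideanSpace ℝ (Fin d)} (hu : u ∈ Metric.sphere 0 1) :
    |√(⟪x, u⟫_ℝ - dubA Ω u) - √(⟪y, u⟫_ℝ - dubA Ω u)| ≤ dubMetric Ω x y := by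
  refine le_ciSup (f := fun v : Metric.sphere (0 : EuclideanSpace ℝ (Fin d)) 1 =>
    |√(⟪x, (v : EuclideanSpace ℝ (Fin d))⟫_ℝ - dubA Ω v) - √(⟪y, (v : _)⟫_ℝ - dubA Ω v)|)
    ⟨√‖x - y‖, ?_⟩ ⟨u, hu⟩
  rintro _ ⟨⟨v, hv⟩, rfl⟩
  calc _ ≤ √|(⟪x, v⟫_ℝ - dubA Ω v) - (⟪y, v⟫_ℝ - dubA Ω v)| :=
        abs_sqrt_sub_sqrt_le_sqrt_abs_sub _ _
    _ = √|⟪x - y, v⟫_ℝ| := by rw [inner_sub_left, sub_sub_sub_cancel_right]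
    _ ≤ √‖x - y‖ := by
        gcongr
        simpa [mem_sphere_zero_iff_norm.mp hv] using abs_real_inner_le_norm (x - y) v

theorem abs_sqrt_sub_le_sqrt_norm_mul_dubMetric (x y η : EuclideanSpace ℝ (Fin d)) :
    |√(⟪x, η⟫_ℝ - dubA Ω η) - √(⟪y, η⟫_ℝ - dubA Ω η)| ≤ √‖η‖ * dubMetric Ω x y := by
  rcases eq_or_ne η 0 with rfl | hη
  · simp
  set u := ‖η‖⁻¹ • η
  have hu : u ∈ Metric.sphere 0 1 := by simp [u, norm_smul, hη]
  have hgap : ∀ z, ⟪z, η⟫_ℝ - dubA Ω η = ‖η‖ * (⟪z, u⟫_ℝ - dubA Ω u) := fun z => by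
    have hηu : η = ‖η‖ • u := by simp [u, smul_smul, hη]
    conv_lhs => rw [hηu]
    rw [real_inner_smul_right, dubA_smul_of_nonneg Ω (norm_nonneg η)]
    ring
  rw [hgap, hgap, sqrt_mul (norm_nonneg η), sqrt_mul (norm_nonneg η), ← mul_sub, abs_mul,
    abs_of_nonneg (sqrt_nonneg _)]
  exact mul_le_mul_of_nonneg_left (abs_sqrt_sub_le_dubMetric x y hu) (sqrt_nonneg _)

end

theorem dubMetric_affine_general {d : ℕ} (Ω : Set (EuclideanSpace ℝ (Fin d)))
    (hΩc : IsCompact Ω)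
    (T : EuclideanSpace ℝ (Fin d) →ᵃ[ℝ] EuclideanSpace ℝ (Fin d)) :
    ∀ x ∈ Ω, ∀ y ∈ Ω,
      dubMetric (T '' Ω) (T x) (T y) ≤
        Real.sqrt ‖ContinuousLinearMap.adjoint (LinearMap.toContinuousLinearMap T.linear)‖ *
          dubMetric Ω x y := by
  intro x hx y _
  set A := ContinuousLinearMap.adjoint (LinearMap.toContinuousLinearMap T.linear)
  refine Real.iSup_le (fun ⟨ξ, hξ⟩ => ?_) (mul_nonneg (sqrt_nonneg _) (dubMetric_nonneg x y))
  have hgap : ∀ z, ⟪T z, ξ⟫_ℝ - dubA (T '' Ω) ξ = ⟪z, A ξ⟫_ℝ - dubA Ω (A ξ) := fun z => by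
    rw [T.inner_apply_eq_inner_adjoint_add, dubA_image_affineMap hΩc ⟨x, hx⟩]
    ring
  calc |√(⟪T x, ξ⟫_ℝ - dubA (T '' Ω) ξ) - √(⟪T y, ξ⟫_ℝ - dubA (T '' Ω) ξ)|
      = |√(⟪x, A ξ⟫_ℝ - dubA Ω (A ξ)) - √(⟪y, A ξ⟫_ℝ - dubA Ω (A ξ))| := by rw [hgap, hgap]
    _ ≤ √‖A ξ‖ * dubMetric Ω x y := abs_sqrt_sub_le_sqrt_norm_mul_dubMetric x y (A ξ)
    _ ≤ √‖A‖ * dubMetric Ω x y :=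
        mul_le_mul_of_nonneg_right
          (sqrt_le_sqrt (A.unit_le_opNorm ξ (mem_sphere_zero_iff_norm.mp hξ).le))
          (dubMetric_nonneg x y)

theorem dubMetric_affine {d : ℕ} (hd : 1 ≤ d) (Ω : Set (EuclideanSpace ℝ (Fin d)))
    (hΩc : IsCompact Ω) (hΩconv : Convex ℝ Ω)
    (T : EuclideanSpace ℝ (Fin d) →ᵃ[ℝ] EuclideanSpace ℝ (Fin d))
    (hT : Function.Bijective T.linear) :
    ∀ x ∈ Ω, ∀ y ∈ Ω,
      dubMetric (T '' Ω) (T x) (T y) ≤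
        Real.sqrt ‖ContinuousLinearMap.adjoint (LinearMap.toContinuousLinearMap T.linear)‖ *
          dubMetric Ω x y :=
  dubMetric_affine_general Ω hΩc T
end

section
/- Let Ω ⊂ ℝ^d be a convex body and ρ its Dubiner-type metric. For x ∈ Ω, ξ ∈ S^{d−1} and h > 0, define the strip S(Ω,x,ξ,h) := { y ∈ Ω : |√(x·ξ − a_ξ) − √(y·ξ − a_ξ)| ≤ h }, where a_ξ = min_{z∈Ω} z·ξ. Then S(Ω,x,ξ,2h) ⊆ φ(S(Ω,x,ξ,h)), where φ(z) := x + 4(z − x) is the dilation with center x and ratio 4. -/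
open scoped InnerProductSpace

/-- The strip `S(Ω,x,ξ,h)`. -/
def dubStrip {d : ℕ} (Ω : Set (EuclideanSpace ℝ (Fin d))) (x ξ : EuclideanSpace ℝ (Fin d))
    (h : ℝ) : Set (EuclideanSpace ℝ (Fin d)) :=
  {y ∈ Ω | |Real.sqrt (⟪x, ξ⟫_ℝ - dubA Ω ξ) - Real.sqrt (⟪y, ξ⟫_ℝ - dubA Ω ξ)| ≤ h}

lemma sqrt_quarter_ineq (A B : ℝ) (hA : 0 ≤ A) (hB : 0 ≤ B) :
    |Real.sqrt A - Real.sqrt ((3 * A + B) / 4)| ≤ (1 / 2) * |Real.sqrt A - Real.sqrt B| := by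
  set u := Real.sqrt A with hu
  set v := Real.sqrt B with hv
  set w := Real.sqrt ((3 * A + B) / 4) with hw
  have hu0 : 0 ≤ u := Real.sqrt_nonneg _
  have hv0 : 0 ≤ v := Real.sqrt_nonneg _
  have hw0 : 0 ≤ w := Real.sqrt_nonneg _
  have hu2 : u ^ 2 = A := by rw [hu, Real.sq_sqrt hA]
  have hv2 : v ^ 2 = B := by rw [hv, Real.sq_sqrt hB]
  have hw2 : w ^ 2 = (3 * A + B) / 4 := by
    rw [hw, Real.sq_sqrt]; positivity
  rcases le_total u v with huv | huv
  · have hwu : u ≤ w := by nlinarith [sq_nonneg (w - u), sq_nonneg (w + u)]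
    rw [abs_of_nonpos (by linarith), abs_of_nonpos (by linarith)]
    nlinarith [sq_nonneg (u + v - 2 * w), sq_nonneg (u + v + 2 * w)]
  · have hwu : w ≤ u := by nlinarith [sq_nonneg (w - u), sq_nonneg (w + u)]
    rw [abs_of_nonneg (by linarith), abs_of_nonneg (by linarith)]
    nlinarith [sq_nonneg (u + v - 2 * w), sq_nonneg (u + v + 2 * w)]

theorem dubStrip_doubling {d : ℕ} (Ω : Set (EuclideanSpace ℝ (Fin d)))
    (hΩc : IsCompact Ω) (hΩconv : Convex ℝ Ω) (hΩint : (interior Ω).Nonempty)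
    (x : EuclideanSpace ℝ (Fin d)) (hx : x ∈ Ω)
    (ξ : EuclideanSpace ℝ (Fin d)) (hξ : ξ ∈ Metric.sphere (0 : EuclideanSpace ℝ (Fin d)) 1)
    (h : ℝ) (hh : 0 < h) :
    dubStrip Ω x ξ (2 * h) ⊆ (fun z => x + (4 : ℝ) • (z - x)) '' dubStrip Ω x ξ h := by
  intro y hy
  obtain ⟨hyΩ, hyS⟩ := hy
  set a := dubA Ω ξ with ha
  -- a is a lower bound
  have hcont : Continuous fun z : EuclideanSpace ℝ (Fin d) => ⟪z, ξ⟫_ℝ :=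
    continuous_inner.comp (continuous_id.prodMk continuous_const)
  have hbdd : BddBelow ((fun z => ⟪z, ξ⟫_ℝ) '' Ω) :=
    (hΩc.image hcont).bddBelow
  have hle : ∀ w ∈ Ω, a ≤ ⟪w, ξ⟫_ℝ := fun w hw =>
    csInf_le hbdd ⟨w, hw, rfl⟩
  have hAx : 0 ≤ ⟪x, ξ⟫_ℝ - a := by linarith [hle x hx]
  have hAy : 0 ≤ ⟪y, ξ⟫_ℝ - a := by linarith [hle y hyΩ]
  set z := x + (4 : ℝ)⁻¹ • (y - x) with hz
  have hzcomb : z = (3 / 4 : ℝ) • x + (1 / 4 : ℝ) • y := by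
    rw [hz]; module
  have hzΩ : z ∈ Ω := by
    rw [hzcomb]
    exact hΩconv hx hyΩ (by norm_num) (by norm_num) (by norm_num)
  have hzinner : ⟪z, ξ⟫_ℝ - a = (3 * (⟪x, ξ⟫_ℝ - a) + (⟪y, ξ⟫_ℝ - a)) / 4 := by
    rw [hzcomb]
    simp only [inner_add_left, real_inner_smul_left]
    ring
  refine ⟨z, ⟨hzΩ, ?_⟩, ?_⟩
  · rw [hzinner]
    calc |Real.sqrt (⟪x, ξ⟫_ℝ - a) -
          Real.sqrt ((3 * (⟪x, ξ⟫_ℝ - a) + (⟪y, ξ⟫_ℝ - a)) / 4)|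
        ≤ (1 / 2) * |Real.sqrt (⟪x, ξ⟫_ℝ - a) - Real.sqrt (⟪y, ξ⟫_ℝ - a)| :=
          sqrt_quarter_ineq _ _ hAx hAy
      _ ≤ (1 / 2) * (2 * h) := by
          apply mul_le_mul_of_nonneg_left hyS (by norm_num)
      _ = h := by ring
  · show x + (4 : ℝ) • (z - x) = y
    rw [hz]; module
end

section
/- Let P be a real polynomial of degree at most n in one variable, and let a < b be real numbers. Then for every x ∈ [a,b], |P'(x)| · √((x−a)(b−x)) ≤ n · max_{t∈[a,b]} |P(t)|. -/
/-!
Substituting `x = (a + b) / 2 + (b - a) / 2 * cos θ` turns `P` into a trigonometric polynomial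
`f θ` of degree at most `n`, and `|P' x| * √((x - a) * (b - x)) = |f' θ|`. For such `f`,
M. Riesz's interpolation formula
  `(S / n) * f' θ = ∑ k < 2n, w k * f (θ + x k)`,
with nodes `x k = (2k + 1)π / (2n)`, weights `w k = (-1)^k / sin² (x k / 2)` and `S = ∑ |w k|`,
expresses `f'` through values of `f` with total absolute weight `n`, whence `|f'| ≤ n * max |f|`.
By linearity the formula only has to be checked on `exp (i m θ)` with `|m| ≤ n`, where it says
that the kernel `g m = ∑ w k * exp (i m x k)` equals `i m S / n`: `g` is odd, its second
differences vanish on `0 < m < n`, and `g n = i S` because `exp (i n x k) = i (-1)^k`.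
-/

open Complex Finset Polynomial

noncomputable section

namespace Bernstein

def rieszNode (n k : ℕ) : ℝ := (2 * k + 1) * Real.pi / (2 * n)

def rieszWeight (n k : ℕ) : ℝ := (-1) ^ k / Real.sin (rieszNode n k / 2) ^ 2

def rieszKernel (n : ℕ) (m : ℤ) : ℂ :=
  ∑ k ∈ range (2 * n), (rieszWeight n k : ℂ) * cexp (m * rieszNode n k * I)

def rieszWeightSum (n : ℕ) : ℝ := ∑ k ∈ range (2 * n), |rieszWeight n k|

variable {n : ℕ}

lemma sin_rieszNode_div_two_pos {k : ℕ} (hk : k < 2 * n) :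
    0 < Real.sin (rieszNode n k / 2) := by
  have hn : (0 : ℝ) < n := by exact_mod_cast (show 0 < n by omega)
  have hk' : (2 * k + 1 : ℝ) < 4 * n := by exact_mod_cast (show 2 * k + 1 < 4 * n by omega)
  apply Real.sin_pos_of_pos_of_lt_pi
  · unfold rieszNode; positivity
  · rw [rieszNode, div_div, div_lt_iff₀ (by positivity)]
    nlinarith [Real.pi_pos]

lemma rieszNode_reflect {k : ℕ} (hk : k < 2 * n) :
    rieszNode n (2 * n - 1 - k) = 2 * Real.pi - rieszNode n k := by
  have hn : (n : ℝ) ≠ 0 := by exact_mod_cast (show n ≠ 0 by omega)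
  rw [rieszNode, rieszNode, Nat.cast_sub (by omega), Nat.cast_sub (by omega)]
  push_cast
  field_simp
  ring

lemma rieszWeight_reflect {k : ℕ} (hk : k < 2 * n) :
    rieszWeight n (2 * n - 1 - k) = -rieszWeight n k := by
  have hsign : (-1 : ℝ) ^ (2 * n - 1 - k) = -(-1) ^ k := by
    calc (-1 : ℝ) ^ (2 * n - 1 - k) = (-1) ^ (2 * n - 1 - k + k) * (-1) ^ k := by
          rw [pow_add, mul_assoc, ← pow_add, ← two_mul, pow_mul]; norm_num
      _ = -(-1) ^ k := by
          rw [show 2 * n - 1 - k + k = 2 * (n - 1) + 1 by omega, pow_succ, pow_mul]; norm_num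
  have hsin : Real.sin (rieszNode n (2 * n - 1 - k) / 2) = Real.sin (rieszNode n k / 2) := by
    rw [rieszNode_reflect hk, ← Real.sin_pi_sub]
    ring_nf
  rw [rieszWeight, rieszWeight, hsign, hsin, neg_div]

lemma rieszKernel_neg (m : ℤ) : rieszKernel n (-m) = -rieszKernel n m := by
  rw [rieszKernel, rieszKernel, ← sum_range_reflect, ← sum_neg_distrib]
  refine sum_congr rfl fun k hk => ?_
  have hk := mem_range.mp hk
  rw [rieszWeight_reflect hk, rieszNode_reflect hk]
  have hexp : cexp (↑(-m) * ↑(2 * Real.pi - rieszNode n k) * I)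
      = cexp (m * rieszNode n k * I) := by
    rw [show (↑(-m) * ↑(2 * Real.pi - rieszNode n k) * I : ℂ)
        = m * rieszNode n k * I + ↑(-m) * (2 * Real.pi * I) by push_cast; ring,
      exp_add, exp_int_mul_two_pi_mul_I, mul_one]
  rw [hexp]
  push_cast
  ring

lemma rieszKernel_zero : rieszKernel n 0 = 0 := by
  have h := rieszKernel_neg (n := n) 0
  rw [neg_zero] at h
  linear_combination h / 2

lemma exp_mul_rieszNode (hn : n ≠ 0) (m : ℤ) (k : ℕ) :
    cexp (m * rieszNode n k * I)
      = cexp (m * Real.pi / (2 * n) * I) * cexp (m * Real.pi / n * I) ^ k := by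
  rw [← exp_nat_mul, ← exp_add, rieszNode]
  congr 1
  push_cast
  field_simp
  ring

/-- A geometric sum whose ratio `-exp (i m π / n)` is a `2n`-th root of unity other than `1`. -/
lemma sum_neg_one_pow_mul_exp_rieszNode {m : ℕ} (hm : 1 ≤ m) (hmn : m < n) :
    ∑ k ∈ range (2 * n), (-1) ^ k * cexp (m * rieszNode n k * I) = 0 := by
  have hn : (n : ℂ) ≠ 0 := by exact_mod_cast (show n ≠ 0 by omega)
  set ζ : ℂ := -cexp (m * Real.pi / n * I)
  have hterm : ∀ k, (-1) ^ k * cexp ((m : ℤ) * rieszNode n k * I)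
      = cexp (m * Real.pi / (2 * n) * I) * ζ ^ k := fun k => by
    rw [exp_mul_rieszNode (by omega), neg_pow]
    push_cast
    ring
  have hζ : ζ ≠ 1 := by
    intro h
    have him := congrArg Complex.im (neg_eq_iff_eq_neg.mp h)
    rw [show (m * Real.pi / n * I : ℂ) = ((m * Real.pi / n : ℝ) : ℂ) * I by push_cast; ring,
      exp_ofReal_mul_I_im] at him
    have hpos : 0 < Real.sin (m * Real.pi / n) := by
      have hm' : (0 : ℝ) < m := by exact_mod_cast hm
      have hmn' : (m : ℝ) < n := by exact_mod_cast hmn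
      apply Real.sin_pos_of_pos_of_lt_pi (div_pos (mul_pos hm' Real.pi_pos) (by linarith))
      rw [div_lt_iff₀ (by linarith)]
      nlinarith [Real.pi_pos]
    rw [neg_im, one_im, neg_zero] at him
    linarith
  have hζn : ζ ^ (2 * n) = 1 := by
    rw [neg_pow, ← exp_nat_mul, pow_mul]
    rw [show ((2 * n : ℕ) : ℂ) * (m * Real.pi / n * I) = (m : ℤ) * (2 * Real.pi * I) by
      push_cast; field_simp, exp_int_mul_two_pi_mul_I]
    norm_num
  simp_rw [← Int.cast_natCast (R := ℂ) m, hterm, ← mul_sum, geom_sum_eq hζ, hζn]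
  simp

lemma rieszWeight_mul_cos_sub_one {k : ℕ} (hk : k < 2 * n) :
    rieszWeight n k * (Real.cos (rieszNode n k) - 1) = -2 * (-1) ^ k := by
  have hsin := (sin_rieszNode_div_two_pos hk).ne'
  rw [rieszWeight, ← mul_div_cancel₀ (rieszNode n k) two_ne_zero, Real.cos_two_mul_eq_one_sub,
    mul_div_cancel₀ _ two_ne_zero]
  field_simp
  ring

lemma rieszKernel_add_one_add_sub_one {m : ℕ} (hm : 1 ≤ m) (hmn : m < n) :
    rieszKernel n (m + 1) + rieszKernel n (m - 1) = 2 * rieszKernel n m := by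
  have hterm : ∀ k ∈ range (2 * n),
      (rieszWeight n k : ℂ) * cexp (↑((m : ℤ) + 1) * rieszNode n k * I)
        + rieszWeight n k * cexp (↑((m : ℤ) - 1) * rieszNode n k * I)
        - 2 * (rieszWeight n k * cexp ((m : ℤ) * rieszNode n k * I))
      = -4 * ((-1) ^ k * cexp (m * rieszNode n k * I)) := fun k hk => by
    have hw := congrArg (fun r : ℝ => (r : ℂ)) (rieszWeight_mul_cos_sub_one (mem_range.mp hk))
    push_cast at hw
    set x := rieszNode n k
    have hcos := Complex.two_cos x
    have hplus : cexp (↑((m : ℤ) + 1) * x * I) = cexp (m * x * I) * cexp (x * I) := by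
      rw [← exp_add]; push_cast; ring_nf
    have hminus : cexp (↑((m : ℤ) - 1) * x * I) = cexp (m * x * I) * cexp (-x * I) := by
      rw [← exp_add]; push_cast; ring_nf
    rw [hplus, hminus]
    linear_combination (2 * cexp (m * x * I)) * hw - (rieszWeight n k * cexp (m * x * I)) * hcos
  have h := sum_congr rfl hterm
  rw [sum_sub_distrib, sum_add_distrib, ← mul_sum, ← mul_sum,
    sum_neg_one_pow_mul_exp_rieszNode hm hmn, mul_zero] at h
  unfold rieszKernel
  push_cast at h ⊢
  linear_combination h

lemma rieszKernel_natCast : ∀ m ≤ n, rieszKernel n m = m * rieszKernel n 1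
  | 0, _ => by simp [rieszKernel_zero]
  | 1, _ => by simp
  | m + 2, hm => by
    have hrec := rieszKernel_add_one_add_sub_one (n := n) (m := m + 1) (by omega) (by omega)
    rw [Nat.cast_succ, add_sub_cancel_right, ← Nat.cast_succ, ← Nat.cast_succ,
      rieszKernel_natCast m (by omega), rieszKernel_natCast (m + 1) (by omega)] at hrec
    push_cast at hrec ⊢
    rw [add_assoc, one_add_one_eq_two] at hrec
    linear_combination hrec

lemma rieszKernel_intCast {m : ℤ} (hm : |m| ≤ n) : rieszKernel n m = m * rieszKernel n 1 := by
  obtain ⟨k, rfl | rfl⟩ := Int.eq_nat_or_neg m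
  · exact_mod_cast rieszKernel_natCast k (by simpa using hm)
  · rw [rieszKernel_neg, rieszKernel_natCast k (by simpa using hm)]
    push_cast
    ring

lemma abs_rieszWeight (k : ℕ) : |rieszWeight n k| = rieszWeight n k * (-1) ^ k := by
  rw [rieszWeight, abs_div, abs_pow, abs_neg, abs_one, one_pow, abs_of_nonneg (sq_nonneg _),
    div_mul_eq_mul_div, ← pow_add, ← two_mul, pow_mul]
  norm_num

lemma rieszWeightSum_pos (hn : n ≠ 0) : 0 < rieszWeightSum n :=
  sum_pos' (fun k _ => abs_nonneg _) ⟨0, mem_range.mpr (by omega), abs_pos.mpr <|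
    div_ne_zero (by norm_num) (pow_ne_zero 2 (sin_rieszNode_div_two_pos (by omega)).ne')⟩

lemma rieszKernel_self (hn : n ≠ 0) : rieszKernel n n = rieszWeightSum n * I := by
  have hn' : (n : ℂ) ≠ 0 := by exact_mod_cast hn
  rw [rieszKernel, rieszWeightSum, ofReal_sum, sum_mul]
  refine sum_congr rfl fun k _ => ?_
  rw [exp_mul_rieszNode hn, abs_rieszWeight]
  have h1 : ((n : ℤ) * Real.pi / (2 * n) * I : ℂ) = Real.pi / 2 * I := by push_cast; field_simp
  have h2 : ((n : ℤ) * Real.pi / n * I : ℂ) = Real.pi * I := by push_cast; field_simp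
  rw [h1, h2, exp_pi_div_two_mul_I, exp_pi_mul_I]
  push_cast
  ring

lemma rieszKernel_one (hn : n ≠ 0) : rieszKernel n 1 = (rieszWeightSum n / n : ℝ) * I := by
  have hn' : (n : ℂ) ≠ 0 := by exact_mod_cast hn
  have h := rieszKernel_self hn
  rw [rieszKernel_natCast n le_rfl] at h
  push_cast
  field_simp
  linear_combination h

def expSum {ι : Type*} (s : Finset ι) (c : ι → ℂ) (μ : ι → ℤ) (t : ℝ) : ℂ :=
  ∑ i ∈ s, c i * cexp (μ i * t * I)

section expSum

variable {ι : Type*} (s : Finset ι) (c : ι → ℂ) (μ : ι → ℤ)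

lemma hasDerivAt_expSum (θ : ℝ) :
    HasDerivAt (expSum s c μ) (expSum s (fun i => μ i * I * c i) μ θ) θ := by
  unfold expSum
  refine HasDerivAt.fun_sum fun i _ => ?_
  have h := ((((hasDerivAt_id (θ : ℂ)).const_mul (μ i : ℂ)).mul_const I).cexp.const_mul
    (c i)).comp_ofReal
  simp only [id, mul_one] at h
  exact h.congr_deriv (by ring)

lemma sum_rieszWeight_mul_expSum (hn : n ≠ 0) (hμ : ∀ i ∈ s, |μ i| ≤ n) (θ : ℝ) :
    ∑ k ∈ range (2 * n), rieszWeight n k * expSum s c μ (θ + rieszNode n k)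
      = (rieszWeightSum n / n : ℝ) * expSum s (fun i => μ i * I * c i) μ θ := by
  have hterm : ∀ i ∈ s, ∑ k ∈ range (2 * n),
      (rieszWeight n k : ℂ) * (c i * cexp (μ i * ↑(θ + rieszNode n k) * I))
        = c i * cexp (μ i * θ * I) * rieszKernel n (μ i) := fun i _ => by
    rw [rieszKernel, mul_sum]
    refine sum_congr rfl fun k _ => ?_
    rw [ofReal_add, mul_add, add_mul, exp_add]
    ring
  simp only [expSum, mul_sum]
  rw [sum_comm, sum_congr rfl hterm]
  refine sum_congr rfl fun i hi => ?_
  rw [rieszKernel_intCast (hμ i hi), rieszKernel_one hn]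
  ring

theorem norm_deriv_expSum_le (hμ : ∀ i ∈ s, |μ i| ≤ n) {M : ℝ}
    (hM : ∀ t, ‖expSum s c μ t‖ ≤ M) (θ : ℝ) : ‖deriv (expSum s c μ) θ‖ ≤ n * M := by
  rw [(hasDerivAt_expSum s c μ θ).deriv]
  set D := expSum s (fun i => μ i * I * c i) μ θ
  rcases eq_or_ne n 0 with rfl | hn
  · have hD : D = 0 := sum_eq_zero fun i hi => by simp [abs_nonpos_iff.mp (hμ i hi)]
    simp [hD]
  have hS := rieszWeightSum_pos hn
  have hnpos : (0 : ℝ) < n := by exact_mod_cast Nat.pos_of_ne_zero hn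
  have hweighted : rieszWeightSum n / n * ‖D‖ ≤ rieszWeightSum n * M := by
    calc rieszWeightSum n / n * ‖D‖
        = ‖∑ k ∈ range (2 * n), rieszWeight n k * expSum s c μ (θ + rieszNode n k)‖ := by
          rw [sum_rieszWeight_mul_expSum s c μ hn hμ, norm_mul, norm_real,
            Real.norm_of_nonneg (by positivity)]
      _ ≤ ∑ k ∈ range (2 * n), |rieszWeight n k| * M := by
          refine (norm_sum_le _ _).trans (sum_le_sum fun k _ => ?_)
          rw [norm_mul, norm_real, Real.norm_eq_abs]
          exact mul_le_mul_of_nonneg_left (hM _) (abs_nonneg _)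
      _ = rieszWeightSum n * M := by rw [rieszWeightSum, sum_mul]
  rw [div_mul_eq_mul_div, div_le_iff₀ hnpos, mul_assoc] at hweighted
  linarith [le_of_mul_le_mul_left hweighted hS]

end expSum

lemma cos_pow_eq_expSum (j : ℕ) (t : ℝ) :
    (Real.cos t : ℂ) ^ j
      = expSum (range (j + 1)) (fun k => j.choose k / 2 ^ j) (fun k => 2 * k - j) t := by
  rw [ofReal_cos, ← mul_div_cancel_left₀ (cos (t : ℂ)) two_ne_zero, two_cos, div_pow, add_pow,
    sum_div, expSum]
  refine sum_congr rfl fun k hk => ?_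
  have hkj : k ≤ j := Nat.lt_succ_iff.mp (mem_range.mp hk)
  rw [← exp_nat_mul, ← exp_nat_mul, ← exp_add]
  have hexp : (k * (t * I) + ↑(j - k) * (-t * I) : ℂ) = ↑(2 * (k : ℤ) - j) * t * I := by
    push_cast [Nat.cast_sub hkj]
    ring
  rw [hexp]
  ring

lemma eval_cos_eq_expSum (P : ℝ[X]) (t : ℝ) :
    ((P.eval (Real.cos t) : ℝ) : ℂ)
      = expSum ((range (P.natDegree + 1)).sigma fun j => range (j + 1))
          (fun p => P.coeff p.1 * (p.1.choose p.2 / 2 ^ p.1)) (fun p => 2 * p.2 - p.1) t := by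
  rw [eval_eq_sum_range, ofReal_sum, expSum, sum_sigma]
  refine sum_congr rfl fun j _ => ?_
  rw [ofReal_mul, ofReal_pow, cos_pow_eq_expSum, expSum, mul_sum]
  refine sum_congr rfl fun k _ => ?_
  ring

theorem abs_derivative_eval_mul_sqrt_one_sub_sq_le {P : ℝ[X]} (hP : P.natDegree ≤ n)
    {M : ℝ} (hM : ∀ y ∈ Set.Icc (-1 : ℝ) 1, |P.eval y| ≤ M) {y : ℝ}
    (hy : y ∈ Set.Icc (-1 : ℝ) 1) :
    |P.derivative.eval y| * √(1 - y ^ 2) ≤ n * M := by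
  have hf : (fun t : ℝ => ((P.eval (Real.cos t) : ℝ) : ℂ)) = _ := funext (eval_cos_eq_expSum P)
  have hμ : ∀ p ∈ (range (P.natDegree + 1)).sigma fun j => range (j + 1),
      |2 * (p.2 : ℤ) - p.1| ≤ n := fun p hp => by
    simp only [mem_sigma, mem_range] at hp
    rw [abs_le]
    omega
  have hfM : ∀ t, ‖(fun t : ℝ => ((P.eval (Real.cos t) : ℝ) : ℂ)) t‖ ≤ M := fun t => by
    rw [norm_real, Real.norm_eq_abs]
    exact hM _ ⟨Real.neg_one_le_cos t, Real.cos_le_one t⟩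
  rw [hf] at hfM
  have hbound := norm_deriv_expSum_le _ _ _ hμ hfM (Real.arccos y)
  have hderiv : HasDerivAt (fun t : ℝ => ((P.eval (Real.cos t) : ℝ) : ℂ))
      ↑(P.derivative.eval (Real.cos (Real.arccos y)) * -Real.sin (Real.arccos y)) (Real.arccos y) :=
    ((P.hasDerivAt _).comp _ (Real.hasDerivAt_cos _)).ofReal_comp
  rw [← hf, hderiv.deriv, norm_real, Real.norm_eq_abs] at hbound
  rwa [abs_mul, abs_neg, Real.cos_arccos hy.1 hy.2, Real.sin_arccos,
    abs_of_nonneg (Real.sqrt_nonneg _)] at hbound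

theorem abs_derivative_eval_mul_sqrt_le {P : ℝ[X]} (hP : P.natDegree ≤ n) {a b : ℝ}
    (hab : a < b) {M : ℝ} (hM : ∀ t ∈ Set.Icc a b, |P.eval t| ≤ M) {x : ℝ}
    (hx : x ∈ Set.Icc a b) :
    |P.derivative.eval x| * √((x - a) * (b - x)) ≤ n * M := by
  set c := (a + b) / 2
  set r := (b - a) / 2
  have hr : 0 < r := by simp only [r]; linarith
  set y := (x - c) / r
  have hxy : r * y + c = x := by simp only [y]; field_simp; ring
  have hy : y ∈ Set.Icc (-1 : ℝ) 1 := by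
    simp only [y, Set.mem_Icc, le_div_iff₀ hr, div_le_iff₀ hr, c, r]
    constructor <;> linarith [hx.1, hx.2]
  have hQ : (P.comp (C r * X + C c)).natDegree ≤ n :=
    natDegree_comp_le.trans ((Nat.mul_le_mul hP natDegree_linear_le).trans_eq (mul_one n))
  have hQM : ∀ y ∈ Set.Icc (-1 : ℝ) 1, |(P.comp (C r * X + C c)).eval y| ≤ M := fun y hy => by
    simp only [eval_comp, eval_add, eval_mul, eval_C, eval_X]
    have hba : 0 ≤ b - a := by linarith
    simp only [c, r]
    exact hM _ ⟨by nlinarith [hy.1], by nlinarith [hy.2]⟩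
  have hsqrt : √((x - a) * (b - x)) = r * √(1 - y ^ 2) := by
    rw [← Real.sqrt_sq hr.le, ← Real.sqrt_mul (sq_nonneg r)]
    rw [mul_one_sub, ← mul_pow, show r * y = x - c by linarith]
    simp only [c, r]
    ring_nf
  have hQ' : (P.comp (C r * X + C c)).derivative.eval y = r * P.derivative.eval x := by
    simp [derivative_comp, hxy]
  have h := abs_derivative_eval_mul_sqrt_one_sub_sq_le hQ hQM hy
  rw [hQ'] at h
  calc |P.derivative.eval x| * √((x - a) * (b - x))
      = |r * P.derivative.eval x| * √(1 - y ^ 2) := by rw [hsqrt, abs_mul, abs_of_pos hr]; ring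
    _ ≤ n * M := h

end Bernstein

theorem bernstein_inequality (n : ℕ) (P : Polynomial ℝ) (hP : P.natDegree ≤ n)
    (a b : ℝ) (hab : a < b) (x : ℝ) (hx : x ∈ Set.Icc a b) :
    |P.derivative.eval x| * Real.sqrt ((x - a) * (b - x)) ≤
      n * sSup ((fun t => |P.eval t|) '' Set.Icc a b) := by
  have hbdd : BddAbove ((fun t => |P.eval t|) '' Set.Icc a b) :=
    isCompact_Icc.bddAbove_image P.continuous.abs.continuousOn
  exact Bernstein.abs_derivative_eval_mul_sqrt_le hP hab
    (fun t ht => le_csSup hbdd (Set.mem_image_of_mem _ ht)) hx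
end
end

section
/- Let f : [−1,1] → ℝ be a continuous convex function with f(0) = 0 and right derivative f'_+(0) = 0, with 0 ≤ f(x) ≤ 1/5 and |f'_±(x)| ≤ 1/3 for all x ∈ [−1,1]. Suppose 0 < δ ≤ 1/100 and max_{x∈[−1,1]} f(x) > δ/2. Then there exist k > 0, ξ ∈ [−1,1] \ {0}, and a linear function ℓ(x) = αx − β such that: (i) 0 < |α| ≤ 1/3 and 0 ≤ β ≤ 1/3; (ii) ℓ(ξ) = f(ξ) and α = f'_−(ξ); (iii) f(x) ≤ δ/2 + kx² for all x ∈ [−1,1]; and (iv) √(δ+β)/|α| < 1/√k. -/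
private lemma geometric_lemma_alg (k δ t u F : ℝ) (hk : 0 < k) (hδ : 0 < δ) (hu : 0 < u)
    (htu : F ≤ t * u) (hF : 3*δ/8 + k*u^2 ≤ F) :
    k * (δ + (t*u - F)) < t^2 := by
  set P := t * u with hP
  have hFpos : 0 < F := by nlinarith
  have hPF : F ≤ P := htu
  have hFk : 3*δ/8 ≤ F - k*u^2 := by linarith
  have key1 : k*δ*u^2 < F^2 := by
    nlinarith [sq_nonneg (3*δ/8 - k*u^2), mul_pos (mul_pos hk hδ) (mul_pos hu hu),
      mul_le_mul hF hF (by positivity : (0:ℝ) ≤ 3*δ/8 + k*u^2) hFpos.le]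
  have key2 : F*(F - k*u^2) ≤ P*(P - k*u^2) := by nlinarith
  have hmain : 0 < P^2 - k*u^2*P + k*u^2*F - k*δ*u^2 := by nlinarith
  have hPsq : P^2 = t^2 * u^2 := by rw [hP]; ring
  have husq : 0 < u^2 := by positivity
  nlinarith

private lemma geometric_lemma_sqrt (k δ α β : ℝ) (hk : 0 < k) (hδ : 0 < δ) (hβ : 0 ≤ β)
    (hαne : α ≠ 0) (hkey : k * (δ + β) < α^2) :
    Real.sqrt (δ + β) / |α| < 1 / Real.sqrt k := by
  have hαpos : 0 < |α| := abs_pos.mpr hαne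
  have hkpos : 0 < Real.sqrt k := Real.sqrt_pos.mpr hk
  rw [div_lt_div_iff₀ hαpos hkpos, one_mul, ← Real.sqrt_mul (by positivity) k,
    Real.sqrt_lt' hαpos]
  calc (δ + β) * k < α^2 := by linarith
    _ = |α|^2 := (sq_abs α).symm


theorem geometric_lemma (f : ℝ → ℝ)
    (hconv : ConvexOn ℝ (Set.Icc (-1 : ℝ) 1) f)
    (hcont : ContinuousOn f (Set.Icc (-1 : ℝ) 1))
    (hf0 : f 0 = 0)
    (hf'0 : derivWithin f (Set.Ici (0 : ℝ)) 0 = 0)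
    (hfbd : ∀ x ∈ Set.Icc (-1 : ℝ) 1, 0 ≤ f x ∧ f x ≤ 1 / 5)
    (hf'bd : ∀ x ∈ Set.Icc (-1 : ℝ) 1,
      |derivWithin f (Set.Ici x) x| ≤ 1 / 3 ∧ |derivWithin f (Set.Iic x) x| ≤ 1 / 3)
    (δ : ℝ) (hδ : 0 < δ) (hδ' : δ ≤ 1 / 100)
    (hmax : ∃ x ∈ Set.Icc (-1 : ℝ) 1, δ / 2 < f x) :
    ∃ k > (0 : ℝ), ∃ ξ ∈ Set.Icc (-1 : ℝ) 1, ξ ≠ 0 ∧ ∃ α β : ℝ,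
      α ≠ 0 ∧ |α| ≤ 1 / 3 ∧ 0 ≤ β ∧ β ≤ 1 / 3 ∧
      α * ξ - β = f ξ ∧ α = derivWithin f (Set.Iic ξ) ξ ∧
      (∀ x ∈ Set.Icc (-1 : ℝ) 1, f x ≤ δ / 2 + k * x ^ 2) ∧
      Real.sqrt (δ + β) / |α| < 1 / Real.sqrt k := by
  classical
  -- Step A: linear bound near the origin
  have hlin : ∀ x ∈ Set.Icc (-1 : ℝ) 1, f x ≤ |x| / 5 := by
    intro x hx
    obtain ⟨hx1, hx2⟩ := hx
    rcases le_or_gt 0 x with h0 | h0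
    · have h := hconv.2 (show (1:ℝ) ∈ Set.Icc (-1:ℝ) 1 by norm_num)
        (show (0:ℝ) ∈ Set.Icc (-1:ℝ) 1 by norm_num) h0 (by linarith : (0:ℝ) ≤ 1 - x)
        (by ring)
      simp only [smul_eq_mul, mul_one, mul_zero, add_zero, hf0] at h
      have hf1 := (hfbd 1 (by norm_num)).2
      rw [abs_of_nonneg h0]
      nlinarith
    · have h := hconv.2 (show (-1:ℝ) ∈ Set.Icc (-1:ℝ) 1 by norm_num)
        (show (0:ℝ) ∈ Set.Icc (-1:ℝ) 1 by norm_num) (by linarith : (0:ℝ) ≤ -x)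
        (by linarith : (0:ℝ) ≤ 1 + x) (by ring)
      simp only [smul_eq_mul, mul_zero, add_zero, hf0, mul_neg, mul_one, neg_neg] at h
      have hf1 := (hfbd (-1) (by norm_num)).2
      rw [abs_of_neg h0]
      nlinarith
  -- Step B/C: optimal parabola coefficient
  obtain ⟨k, hk, ξ₀, hξ₀I, hξ₀abs, htouch, hdom⟩ :
      ∃ k > (0:ℝ), ∃ ξ₀ ∈ Set.Icc (-1:ℝ) 1, 2*δ ≤ |ξ₀| ∧ f ξ₀ = δ/2 + k * ξ₀^2 ∧
        ∀ x ∈ Set.Icc (-1 : ℝ) 1, f x ≤ δ / 2 + k * x ^ 2 := by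
    set K : Set ℝ := Set.Icc (-1:ℝ) (-(2*δ)) ∪ Set.Icc (2*δ) 1 with hK
    have hKsub : K ⊆ Set.Icc (-1:ℝ) 1 := by
      rintro x (⟨h1, h2⟩ | ⟨h1, h2⟩) <;> constructor <;> nlinarith
    have hKabs : ∀ x ∈ K, 2*δ ≤ |x| := by
      rintro x (⟨h1, h2⟩ | ⟨h1, h2⟩)
      · rw [abs_of_nonpos (by linarith)]; linarith
      · rw [abs_of_nonneg (by linarith)]; linarith
    have hKne : ∀ x ∈ K, x ≠ 0 := by
      intro x hx h; have := hKabs x hx; rw [h, abs_zero] at this; linarith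
    have hKcomp : IsCompact K := (isCompact_Icc).union isCompact_Icc
    set g : ℝ → ℝ := fun x => (f x - δ/2) / x^2 with hg
    have hgcont : ContinuousOn g K := by
      apply ContinuousOn.div
      · exact (hcont.mono hKsub).sub continuousOn_const
      · exact (continuousOn_pow 2)
      · intro x hx; exact pow_ne_zero 2 (hKne x hx)
    obtain ⟨x₀, hx₀I, hfx₀⟩ := hmax
    have habs : 2*δ ≤ |x₀| := by
      have := hlin x₀ hx₀I
      linarith
    have hx₀K : x₀ ∈ K := by
      rcases abs_cases x₀ with ⟨he, _⟩ | ⟨he, _⟩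
      · right; exact ⟨by linarith, hx₀I.2⟩
      · left; exact ⟨hx₀I.1, by linarith⟩
    obtain ⟨ξ₀, hξ₀K, hmaxOn⟩ := hKcomp.exists_isMaxOn ⟨x₀, hx₀K⟩ hgcont
    have hξ₀I := hKsub hξ₀K
    have hξ₀ne : ξ₀ ≠ 0 := hKne ξ₀ hξ₀K
    have hξ₀sq : 0 < ξ₀^2 := by positivity
    have hx₀ne : x₀ ≠ 0 := hKne x₀ hx₀K
    have hx₀sq : 0 < x₀^2 := by positivity
    set k : ℝ := g ξ₀ with hkdef
    have hk : 0 < k := by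
      have h1 : g x₀ ≤ k := hmaxOn hx₀K
      have h2 : 0 < g x₀ := div_pos (by linarith) hx₀sq
      linarith
    refine ⟨k, hk, ξ₀, hξ₀I, hKabs ξ₀ hξ₀K, ?_, ?_⟩
    · have : k * ξ₀^2 = f ξ₀ - δ/2 := by
        rw [hkdef, hg]; field_simp
      linarith
    · intro x hxI
      rcases le_or_gt (2*δ) |x| with hcase | hcase
      · have hxK : x ∈ K := by
          rcases abs_cases x with ⟨he, _⟩ | ⟨he, _⟩
          · right; exact ⟨by linarith, hxI.2⟩
          · left; exact ⟨hxI.1, by linarith⟩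
        have h1 : g x ≤ k := hmaxOn hxK
        have hxne : x ≠ 0 := hKne x hxK
        have hxsq : 0 < x^2 := by positivity
        rw [hg] at h1
        have := (div_le_iff₀ hxsq).mp h1
        linarith
      · have h1 := hlin x hxI
        have h2 : 0 ≤ k * x^2 := by positivity
        nlinarith [abs_nonneg x]
  -- Step D: choose an interior near-touching point
  obtain ⟨ξ, hξIoo, hξne, hFlow⟩ :
      ∃ ξ, ξ ∈ Set.Ioo (-1:ℝ) 1 ∧ ξ ≠ 0 ∧ 3*δ/8 + k*ξ^2 ≤ f ξ := by
    by_cases hcase : ξ₀ ∈ Set.Ioo (-1:ℝ) 1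
    · refine ⟨ξ₀, hcase, ?_, by rw [htouch]; linarith⟩
      intro h; rw [h, abs_zero] at hξ₀abs; linarith
    · have hval : 3*δ/8 < f ξ₀ - k*ξ₀^2 := by rw [htouch]; linarith
      have hcw : ContinuousWithinAt (fun x => f x - k*x^2) (Set.Icc (-1:ℝ) 1) ξ₀ :=
        (hcont ξ₀ hξ₀I).sub (Continuous.continuousWithinAt (by continuity))
      have hev : ∀ᶠ x in nhdsWithin ξ₀ (Set.Icc (-1:ℝ) 1), 3*δ/8 < f x - k*x^2 :=
        hcw (Ioi_mem_nhds hval)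
      have hends : ξ₀ = -1 ∨ ξ₀ = 1 := by
        obtain ⟨h1, h2⟩ := hξ₀I
        simp only [Set.mem_Ioo, not_and_or, not_lt] at hcase
        rcases hcase with h | h
        · left; linarith
        · right; linarith
      rcases hends with h1eq | h1eq
      · rw [h1eq] at hev
        haveI := left_nhdsWithin_Ioo_neBot (show (-1:ℝ) < -(1/2) by norm_num)
        have hev2 : ∀ᶠ x in nhdsWithin (-1:ℝ) (Set.Ioo (-1:ℝ) (-(1/2))),
            3*δ/8 < f x - k*x^2 :=
          hev.filter_mono (nhdsWithin_mono _ (by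
            rintro x ⟨ha, hb⟩; exact ⟨ha.le, by linarith⟩))
        obtain ⟨ξ, hgt, hmem⟩ := (hev2.and eventually_mem_nhdsWithin).exists
        refine ⟨ξ, ⟨hmem.1, by linarith [hmem.2]⟩, by intro h; rw [h] at hmem; linarith [hmem.2], by linarith⟩
      · rw [h1eq] at hev
        haveI := right_nhdsWithin_Ioo_neBot (show (1:ℝ)/2 < 1 by norm_num)
        have hev2 : ∀ᶠ x in nhdsWithin (1:ℝ) (Set.Ioo (1/2:ℝ) 1),
            3*δ/8 < f x - k*x^2 :=
          hev.filter_mono (nhdsWithin_mono _ (by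
            rintro x ⟨ha, hb⟩; exact ⟨by linarith, hb.le⟩))
        obtain ⟨ξ, hgt, hmem⟩ := (hev2.and eventually_mem_nhdsWithin).exists
        refine ⟨ξ, ⟨by linarith [hmem.1], hmem.2⟩, by intro h; rw [h] at hmem; linarith [hmem.1], by linarith⟩
  obtain ⟨hξ1, hξ2⟩ := hξIoo
  have hξI : ξ ∈ Set.Icc (-1:ℝ) 1 := ⟨le_of_lt hξ1, le_of_lt hξ2⟩
  have hξsq : 0 < ξ^2 := by positivity
  have hFpos : 0 < f ξ := by nlinarith
  -- Step E: the left derivative exists and satisfies f ξ ≤ α ξ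
  set α : ℝ := derivWithin f (Set.Iic ξ) ξ with hαdef
  have hE : f ξ ≤ α * ξ := by
    have hmono : MonotoneOn (slope f ξ) (Set.Icc (-1:ℝ) 1 \ {ξ}) := hconv.slope_mono hξI
    have hsub : Set.Ioo (-1:ℝ) ξ ⊆ Set.Icc (-1:ℝ) 1 \ {ξ} := by
      rintro w ⟨h1, h2⟩
      exact ⟨⟨le_of_lt h1, by linarith⟩, by simp; linarith⟩
    have hne : (Set.Ioo (-1:ℝ) ξ).Nonempty := Set.nonempty_Ioo.mpr hξ1
    have hmono' : MonotoneOn (slope f ξ) (Set.Ioo (-1:ℝ) ξ) := hmono.mono hsub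
    have h1mem : (1:ℝ) ∈ Set.Icc (-1:ℝ) 1 \ {ξ} := ⟨by norm_num, by simp; linarith⟩
    have hbdd : BddAbove (slope f ξ '' Set.Ioo (-1:ℝ) ξ) := by
      refine ⟨slope f ξ 1, ?_⟩
      rintro y ⟨w, hw, rfl⟩
      exact hmono (hsub hw) h1mem (by linarith [hw.2])
    set L : ℝ := sSup (slope f ξ '' Set.Ioo (-1:ℝ) ξ) with hL
    have htend : Filter.Tendsto (slope f ξ) (nhdsWithin ξ (Set.Iio ξ)) (nhds L) :=
      MonotoneOn.tendsto_nhdsWithin_Ioo_left hne hmono' hbdd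
    have hderiv : HasDerivWithinAt f L (Set.Iio ξ) ξ :=
      (hasDerivWithinAt_iff_tendsto_slope' Set.notMem_Iio_self).mpr htend
    have hderiv' : HasDerivWithinAt f L (Set.Iic ξ) ξ := hderiv.Iic_of_Iio
    have hdw : α = L := hderiv'.derivWithin (uniqueDiffOn_Iic ξ ξ Set.self_mem_Iic)
    rw [hdw]
    have hslope0 : slope f ξ 0 = f ξ / ξ := by
      rw [slope_def_field, hf0]
      rw [div_eq_div_iff (by simpa using hξne) hξne]
      ring
    rcases lt_or_gt_of_ne hξne with hneg | hpos
    · have h0mem : (0:ℝ) ∈ Set.Icc (-1:ℝ) 1 \ {ξ} := ⟨by norm_num, by simp [hξne.symm]⟩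
      have hle : L ≤ slope f ξ 0 := by
        apply csSup_le (hne.image _)
        rintro y ⟨w, hw, rfl⟩
        exact hmono (hsub hw) h0mem (by linarith [hw.2])
      rw [hslope0] at hle
      have h2 := mul_le_mul_of_nonpos_right hle hneg.le
      rwa [div_mul_cancel₀ _ hξne] at h2
    · have h0mem : (0:ℝ) ∈ Set.Ioo (-1:ℝ) ξ := ⟨by norm_num, hpos⟩
      have hge : slope f ξ 0 ≤ L := le_csSup hbdd ⟨0, h0mem, rfl⟩
      rw [hslope0] at hge
      have h2 := mul_le_mul_of_nonneg_right hge hpos.le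
      rwa [div_mul_cancel₀ _ hξne] at h2
  -- assemble
  have hα13 : |α| ≤ 1/3 := (hf'bd ξ hξI).2
  have hαξpos : 0 < α * ξ := lt_of_lt_of_le hFpos hE
  have hαne : α ≠ 0 := by
    intro h; rw [h, zero_mul] at hαξpos; exact lt_irrefl 0 hαξpos
  have habsmul : |α| * |ξ| = α * ξ := by
    rw [← abs_mul]; exact abs_of_pos hαξpos
  have hξabs1 : |ξ| ≤ 1 := abs_le.mpr ⟨hξI.1, hξI.2⟩
  have hξabspos : 0 < |ξ| := abs_pos.mpr hξne
  set β : ℝ := α * ξ - f ξ with hβdef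
  have hβ0 : 0 ≤ β := by rw [hβdef]; linarith
  have hβ13 : β ≤ 1/3 := by
    have h1 : |α| * |ξ| ≤ (1/3) * 1 :=
      mul_le_mul hα13 hξabs1 (abs_nonneg ξ) (by norm_num)
    have h2 : α * ξ ≤ 1/3 := by rw [← habsmul]; linarith
    rw [hβdef]; linarith
  -- the key inequality
  have hkey : k * (δ + β) < α^2 := by
    have husq : |ξ|^2 = ξ^2 := sq_abs ξ
    have htu : f ξ ≤ |α| * |ξ| := by rw [habsmul]; exact hE
    have hF : 3*δ/8 + k*|ξ|^2 ≤ f ξ := by rw [husq]; exact hFlow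
    have hβeq : β = |α| * |ξ| - f ξ := by rw [hβdef, habsmul]
    have htsq : |α|^2 = α^2 := sq_abs α
    rw [hβeq, ← htsq]
    exact geometric_lemma_alg k δ |α| |ξ| (f ξ) hk hδ hξabspos htu hF
  refine ⟨k, hk, ξ, hξI, hξne, α, β, hαne, hα13, hβ0, hβ13, by rw [hβdef]; ring, rfl, hdom, ?_⟩
  exact geometric_lemma_sqrt k δ α β hk hδ hβ0 hαne hkey
end

section
/- Let f : [−1,1] → ℝ be convex with f(0) = 0, let δ > 0, and let k := inf{ k̃ ≥ 0 : δ/2 + k̃x² ≥ f(x) for all x ∈ [−1,1] }. If max_{x∈[−1,1]} f(x) > δ/2, then k > 0 and there exists ξ ∈ [−1,1], ξ ≠ 0, with f(ξ) − kξ² = δ/2 and f(x) − kx² ≤ δ/2 for all x ∈ [−1,1]. -/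
/-!
A convex function on `[a, b]` is upper semicontinuous there: continuous inside, and below its
chord near the endpoints. Hence `f` is bounded above and, as `f 0 = 0 < δ / 2`, stays below `δ / 2`
near `0`, so some parabola `δ / 2 + t x ^ 2` lies above `f`. The admissible `t` form a closed set,
so their infimum `k` is admissible. If `δ / 2 + k x ^ 2` did not touch `f`, then `f x - k x ^ 2`,
being upper semicontinuous, would attain a maximum `δ / 2 - m < δ / 2` on the compact interval,
and `k` could be lowered by a multiple of `m`. The touching point is not `0` since `f 0 < δ / 2`.
-/

open Set

lemma upperSemicontinuousWithinAt_of_le_of_eq {α β : Type*} [TopologicalSpace α] [LinearOrder β]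
    [TopologicalSpace β] [ClosedIciTopology β] {f g : α → β} {s : Set α} {x : α}
    (hg : ContinuousWithinAt g s x) (hle : ∀ y ∈ s, f y ≤ g y) (heq : f x = g x) :
    UpperSemicontinuousWithinAt f s x :=
  upperSemicontinuousWithinAt_iff.2 fun y hy =>
    ((hg.eventually (Iio_mem_nhds (by rwa [← heq]))).and self_mem_nhdsWithin).mono
      fun z ⟨hz, hzs⟩ => (hle z hzs).trans_lt hz

lemma ConvexOn.le_chord {f : ℝ → ℝ} {a b x : ℝ} (hf : ConvexOn ℝ (Icc a b) f)
    (hx : x ∈ Icc a b) : f x ≤ f a + (x - a) / (b - a) * (f b - f a) := by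
  rcases eq_or_lt_of_le (hx.1.trans hx.2) with rfl | hab
  · simp [le_antisymm hx.2 hx.1]
  have hba : 0 < b - a := sub_pos.2 hab
  have hconv := hf.2 (left_mem_Icc.2 hab.le) (right_mem_Icc.2 hab.le)
    (div_nonneg (sub_nonneg.2 hx.2) hba.le) (div_nonneg (sub_nonneg.2 hx.1) hba.le)
    (by field_simp; ring)
  have hcomb : ((b - x) / (b - a)) • a + ((x - a) / (b - a)) • b = x := by
    simp only [smul_eq_mul]; field_simp; ring
  rw [hcomb, smul_eq_mul, smul_eq_mul] at hconv
  calc f x ≤ (b - x) / (b - a) * f a + (x - a) / (b - a) * f b := hconv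
    _ = f a + (x - a) / (b - a) * (f b - f a) := by field_simp; ring

lemma ConvexOn.upperSemicontinuousOn_Icc {f : ℝ → ℝ} {a b : ℝ} (hf : ConvexOn ℝ (Icc a b) f) :
    UpperSemicontinuousOn f (Icc a b) := by
  intro x hx
  rcases eq_or_lt_of_le hx.1 with rfl | hax
  · exact upperSemicontinuousWithinAt_of_le_of_eq (by fun_prop) (fun y hy => hf.le_chord hy)
      (by simp)
  rcases eq_or_lt_of_le hx.2 with rfl | hxb
  · exact upperSemicontinuousWithinAt_of_le_of_eq (by fun_prop) (fun y hy => hf.le_chord hy)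
      (by field_simp [(sub_pos.2 hax).ne']; ring)
  have hcont : ContinuousAt f x := by
    have := hf.continuousOn_interior x (by rw [interior_Icc]; exact ⟨hax, hxb⟩)
    rwa [continuousWithinAt_iff_continuousAt (by rw [interior_Icc]; exact Ioo_mem_nhds hax hxb)]
      at this
  exact hcont.continuousWithinAt.upperSemicontinuousWithinAt

def majorantCoeffs {X : Type*} (K : Set X) (f p : X → ℝ) (c : ℝ) : Set ℝ :=
  {t | 0 ≤ t ∧ ∀ x ∈ K, f x ≤ c + t * p x}

section majorantCoeffs

variable {X : Type*} {K : Set X} {f p : X → ℝ} {c : ℝ}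

lemma isClosed_majorantCoeffs : IsClosed (majorantCoeffs K f p c) := by
  have : majorantCoeffs K f p c = Ici 0 ∩ ⋂ x ∈ K, {t | f x ≤ c + t * p x} := by
    ext; simp [majorantCoeffs]
  rw [this]
  exact isClosed_Ici.inter (isClosed_biInter fun x _ => isClosed_le continuous_const (by fun_prop))

lemma bddBelow_majorantCoeffs : BddBelow (majorantCoeffs K f p c) := ⟨0, fun _ ht => ht.1⟩

lemma sInf_mem_majorantCoeffs (h : (majorantCoeffs K f p c).Nonempty) :
    sInf (majorantCoeffs K f p c) ∈ majorantCoeffs K f p c :=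
  isClosed_majorantCoeffs.csInf_mem h bddBelow_majorantCoeffs

lemma exists_eq_add_sInf_majorantCoeffs_mul [TopologicalSpace X] (hK : IsCompact K)
    (hKne : K.Nonempty) (hf : UpperSemicontinuousOn f K) (hp : ContinuousOn p K)
    (hpos : 0 < sInf (majorantCoeffs K f p c)) :
    ∃ ξ ∈ K, f ξ = c + sInf (majorantCoeffs K f p c) * p ξ := by
  set S := majorantCoeffs K f p c
  set k := sInf S
  have hS : S.Nonempty := nonempty_iff_ne_empty.2 fun h => by simp [k, h] at hpos
  have hkS : k ∈ S := sInf_mem_majorantCoeffs hS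
  obtain ⟨ξ, hξK, hξmax⟩ := (hf.add (ContinuousOn.upperSemicontinuousOn
    (by fun_prop : ContinuousOn (fun x => -(k * p x)) K))).exists_isMaxOn hKne hK
  refine ⟨ξ, hξK, le_antisymm (hkS.2 ξ hξK) ?_⟩
  by_contra! hlt
  obtain ⟨B, hB⟩ := hK.bddAbove_image hp
  set m := c + k * p ξ - f ξ
  set ε := min k (m / max B 1)
  have hε : 0 < ε := lt_min hpos (div_pos (by linarith) (by positivity))
  have hεS : k - ε ∈ S := by
    refine ⟨sub_nonneg.2 (min_le_left _ _), fun x hx => ?_⟩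
    have hmax : f x - k * p x ≤ f ξ - k * p ξ := by simpa [sub_eq_add_neg] using hξmax hx
    have hεp : ε * p x ≤ m := calc
      ε * p x ≤ ε * max B 1 := mul_le_mul_of_nonneg_left
        ((hB (mem_image_of_mem p hx)).trans (le_max_left _ _)) hε.le
      _ ≤ m / max B 1 * max B 1 := mul_le_mul_of_nonneg_right (min_le_right _ _) (by positivity)
      _ = m := div_mul_cancel₀ _ (by positivity)
    linarith
  linarith [csInf_le bddBelow_majorantCoeffs hεS]

end majorantCoeffs

lemma majorantCoeffs_sq_nonempty {K : Set ℝ} {f : ℝ → ℝ} {c : ℝ} (hK : IsCompact K) (h0 : 0 ∈ K)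
    (hf : UpperSemicontinuousOn f K) (hf0 : f 0 < c) :
    (majorantCoeffs K f (· ^ 2) c).Nonempty := by
  obtain ⟨r, hr, hnear⟩ : ∃ r > 0, ∀ x ∈ K, |x| < r → f x < c := by
    have := hf 0 h0 c hf0
    rw [eventually_nhdsWithin_iff, Metric.eventually_nhds_iff] at this
    obtain ⟨r, hr, h⟩ := this
    exact ⟨r, hr, fun x hx hxr => h (by simpa using hxr) hx⟩
  obtain ⟨M, hM⟩ := hf.bddAbove_of_isCompact hK
  refine ⟨max (M - c) 0 / r ^ 2, by positivity, fun x hx => ?_⟩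
  rcases lt_or_ge |x| r with hxr | hrx
  · have := hnear x hx hxr
    have : 0 ≤ max (M - c) 0 / r ^ 2 * x ^ 2 := by positivity
    linarith
  · have hr2 : r ^ 2 ≤ x ^ 2 := by simpa using pow_le_pow_left₀ hr.le hrx 2
    calc f x ≤ M := hM (mem_image_of_mem f hx)
      _ ≤ c + max (M - c) 0 := by linarith [le_max_left (M - c) 0]
      _ = c + max (M - c) 0 / r ^ 2 * r ^ 2 := by field_simp
      _ ≤ c + max (M - c) 0 / r ^ 2 * x ^ 2 := by gcongr

theorem touching_parabola (f : ℝ → ℝ) (hconv : ConvexOn ℝ (Set.Icc (-1 : ℝ) 1) f)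
    (hf0 : f 0 = 0) (δ : ℝ) (hδ : 0 < δ)
    (k : ℝ)
    (hk : k = sInf {k' : ℝ | 0 ≤ k' ∧ ∀ x ∈ Set.Icc (-1 : ℝ) 1, f x ≤ δ / 2 + k' * x ^ 2})
    (hmax : ∃ x ∈ Set.Icc (-1 : ℝ) 1, δ / 2 < f x) :
    0 < k ∧ ∃ ξ ∈ Set.Icc (-1 : ℝ) 1, ξ ≠ 0 ∧ f ξ - k * ξ ^ 2 = δ / 2 ∧
      ∀ x ∈ Set.Icc (-1 : ℝ) 1, f x - k * x ^ 2 ≤ δ / 2 := by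
  change k = sInf (majorantCoeffs (Icc (-1) 1) f (· ^ 2) (δ / 2)) at hk
  have husc := hconv.upperSemicontinuousOn_Icc
  have hkS : k ∈ majorantCoeffs (Icc (-1) 1) f (· ^ 2) (δ / 2) := hk ▸ sInf_mem_majorantCoeffs
    (majorantCoeffs_sq_nonempty isCompact_Icc (by norm_num) husc (by linarith))
  obtain ⟨x₀, hx₀, hfx₀⟩ := hmax
  have hkpos : 0 < k := hkS.1.lt_of_ne fun h => by
    have := hkS.2 x₀ hx₀
    simp only [← h, zero_mul, add_zero] at this
    linarith
  obtain ⟨ξ, hξ, hfξ⟩ := exists_eq_add_sInf_majorantCoeffs_mul isCompact_Icc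
    (nonempty_Icc.2 (by norm_num)) husc (by fun_prop) (hk ▸ hkpos)
  rw [← hk] at hfξ
  refine ⟨hkpos, ξ, hξ, ?_, by linarith, fun x hx => by linarith [hkS.2 x hx]⟩
  rintro rfl
  linarith
end

section
/- Let Ω ⊂ ℝ^d be a convex body with B(0,1) ⊂ Ω ⊂ B(0,d) and Dubiner-type metric ρ. For every integer n ≥ 2 and every x, y ∈ Ω with ρ(x,y) ≥ 2π√(2d)/(n−1), there exists a polynomial P of total degree at most n in d variables such that P(y) = 1, P(x) = 0, and 0 ≤ P(z) ≤ 1 for all z ∈ Ω. -/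
open scoped InnerProductSpace

/-!
Pick a unit vector `ξ` at which `|√(x·ξ - a_ξ) - √(y·ξ - a_ξ)| > π √(2d) / (n - 1)`, and put
`s(z) = ⟪z, ξ⟫ - a_ξ ∈ [0, 2d]` and `u(z) = 1 - s(z) / d ∈ [-1, 1]` on `Ω`. Since
`√(s / 2d) = sin (arccos u / 2)` and `sin` is `1`-Lipschitz, the angles `arccos u(x)` and
`arccos u(y)` are at least `2π / m` apart, `m = n - 1`. So two consecutive extremal points
`kπ / m`, `(k + 1)π / m` of `θ ↦ cos (m θ)` lie between them, and an affine self-map of `[-1, 1]`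
moves `u(x)`, `u(y)` to `cos (kπ / m)`, `cos ((k + 1)π / m)`. Composed with it, the Chebyshev
polynomial `T_m` takes opposite values `±1` at `u(x)`, `u(y)` and stays in `[-1, 1]`, so
`(1 ± T_m(affine map ∘ u)) / 2` is the required polynomial.
-/

open Real Polynomial Set

theorem Polynomial.natDegree_comp_linear_le {R : Type*} [Semiring R] (p : R[X]) (a b : R) :
    (p.comp (C a * X + C b)).natDegree ≤ p.natDegree :=
  natDegree_comp_le.trans <| (Nat.mul_le_mul_left _ (natDegree_linear_le (b := b))).trans_eq
    (mul_one _)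

theorem MvPolynomial.totalDegree_aeval_polynomial_le {σ R : Type*} [CommSemiring R] (q : R[X])
    (L : MvPolynomial σ R) : (Polynomial.aeval L q).totalDegree ≤ q.natDegree * L.totalDegree := by
  rw [aeval_eq_sum_range]
  refine (totalDegree_finsetSum _ _).trans <| Finset.sup_le fun i hi => ?_
  refine (totalDegree_smul_le _ _).trans <| (totalDegree_pow _ _).trans ?_
  exact Nat.mul_le_mul_right _ (Nat.lt_succ_iff.mp (Finset.mem_range.mp hi))

theorem exists_consecutive_int_mul_between {δ θ₁ θ₂ : ℝ} (hδ : 0 < δ) (h : θ₁ + 2 * δ ≤ θ₂) :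
    ∃ k : ℤ, θ₁ ≤ k * δ ∧ (k + 1) * δ ≤ θ₂ := by
  refine ⟨⌈θ₁ / δ⌉, (div_le_iff₀ hδ).mp (Int.le_ceil _), ?_⟩
  have := (lt_div_iff₀ hδ).mp (sub_lt_iff_lt_add.mpr (Int.ceil_lt_add_one (θ₁ / δ)))
  linarith

theorem exists_affine_mapsTo_Icc {lo hi s₁ s₂ r₁ r₂ : ℝ} (h_lo : lo ≤ s₁) (h₁ : s₁ ≤ r₁)
    (hr : r₁ < r₂) (h₂ : r₂ ≤ s₂) (h_hi : s₂ ≤ hi) :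
    ∃ α β : ℝ, α * s₁ + β = r₁ ∧ α * s₂ + β = r₂ ∧
      MapsTo (fun t => α * t + β) (Icc lo hi) (Icc lo hi) := by
  set α := (r₂ - r₁) / (s₂ - s₁)
  have hα₀ : 0 ≤ α := div_nonneg (by linarith) (by linarith)
  have hα₁ : α ≤ 1 := (div_le_one (by linarith)).mpr (by linarith)
  have hα : α * (s₂ - s₁) = r₂ - r₁ := div_mul_cancel₀ _ (by linarith)
  refine ⟨α, r₁ - α * s₁, by ring, by linarith, fun t ht => ⟨?_, ?_⟩⟩
  · nlinarith [ht.1, ht.2]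
  · nlinarith [ht.1, ht.2]

theorem exists_poly_alternating_of_arccos_sep {m : ℕ} (hm : 0 < m) {u v : ℝ}
    (hu : u ∈ Icc (-1) 1) (hv : v ∈ Icc (-1) 1) (hsep : 2 * π / m ≤ |arccos u - arccos v|) :
    ∃ p : ℝ[X], p.natDegree ≤ m ∧ |p.eval u| = 1 ∧ p.eval v = -p.eval u ∧
      MapsTo p.eval (Icc (-1) 1) (Icc (-1) 1) := by
  wlog huv : arccos u ≤ arccos v generalizing u v
  · obtain ⟨p, hdeg, hv_one, hu_neg, hmaps⟩ :=
      this hv hu (by rwa [abs_sub_comm]) (le_of_not_ge huv)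
    exact ⟨p, hdeg, by rw [hu_neg, abs_neg, hv_one], by rw [hu_neg, neg_neg], hmaps⟩
  have hm' : (0 : ℝ) < m := Nat.cast_pos.mpr hm
  -- consecutive extremal points `k π / m`, `(k + 1) π / m` of `cos (m θ)` between the angles
  obtain ⟨k, hk₁, hk₂⟩ := exists_consecutive_int_mul_between (div_pos pi_pos hm')
    (θ₁ := arccos u) (θ₂ := arccos v) (by
      rw [abs_sub_comm, abs_of_nonneg (sub_nonneg.mpr huv)] at hsep
      linarith [mul_div_assoc 2 π (m : ℝ)])
  set ψ₁ := k * (π / m)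
  set ψ₂ := (k + 1) * (π / m)
  have hψ : ψ₁ < ψ₂ := by simp only [ψ₁, ψ₂]; gcongr; linarith
  have mem : ∀ θ, arccos u ≤ θ → θ ≤ arccos v → θ ∈ Icc 0 π := fun θ h₁ h₂ =>
    ⟨(arccos_nonneg u).trans h₁, h₂.trans (arccos_le_pi v)⟩
  have hu_mem := mem _ le_rfl huv
  have hv_mem := mem _ huv le_rfl
  have hψ₁_mem := mem ψ₁ hk₁ (hψ.le.trans hk₂)
  have hψ₂_mem := mem ψ₂ (hk₁.trans hψ.le) hk₂
  obtain ⟨α, β, hαv, hαu, hmaps⟩ := exists_affine_mapsTo_Icc (lo := -1) (hi := 1) hv.1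
    (cos_arccos hv.1 hv.2 ▸ strictAntiOn_cos.antitoneOn hψ₂_mem hv_mem hk₂)
    (strictAntiOn_cos hψ₁_mem hψ₂_mem hψ)
    (cos_arccos hu.1 hu.2 ▸ strictAntiOn_cos.antitoneOn hu_mem hψ₁_mem hk₁) hu.2
  have hT₁ : (Chebyshev.T ℝ m).eval (cos ψ₁) = cos (k * π) := by
    rw [Chebyshev.T_real_cos]; congr 1; simp only [ψ₁]; push_cast; field_simp
  have hT₂ : (Chebyshev.T ℝ m).eval (cos ψ₂) = -cos (k * π) := by
    rw [Chebyshev.T_real_cos, ← cos_add_pi]; congr 1; simp only [ψ₂]; push_cast; field_simp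
  refine ⟨(Chebyshev.T ℝ m).comp (C α * X + C β), ?_, ?_, ?_, ?_⟩
  · simpa [Chebyshev.natDegree_T] using natDegree_comp_linear_le (Chebyshev.T ℝ m) α β
  · simp [hαu, hT₁, abs_cos_int_mul_pi]
  · simp [hαu, hαv, hT₁, hT₂]
  · intro t ht
    simpa using Chebyshev.eval_T_real_mem_Icc m (hmaps ht)

theorem two_mul_abs_sqrt_sub_sqrt_le_abs_arccos_sub {u v : ℝ} (hu : u ∈ Icc (-1) 1)
    (hv : v ∈ Icc (-1) 1) :
    2 * |√((1 - u) / 2) - √((1 - v) / 2)| ≤ |arccos u - arccos v| := by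
  have sqrt_eq : ∀ x ∈ Icc (-1 : ℝ) 1, √((1 - x) / 2) = sin (arccos x / 2) := fun x hx => by
    rw [sin_half_eq_sqrt (arccos_nonneg x) (by linarith [arccos_le_pi x, pi_pos]),
      cos_arccos hx.1 hx.2]
  rw [sqrt_eq u hu, sqrt_eq v hv]
  linarith [abs_sin_sub_sin_le (arccos u / 2) (arccos v / 2),
    show |arccos u / 2 - arccos v / 2| = |arccos u - arccos v| / 2 by
      rw [← sub_div, abs_div, abs_two]]

theorem exists_poly_resolving_of_sqrt_sep {m : ℕ} (hm : 0 < m) {w s t : ℝ} (hw : 0 < w)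
    (hs : s ∈ Icc 0 w) (ht : t ∈ Icc 0 w) (hsep : π * √w / m ≤ |√s - √t|) :
    ∃ q : ℝ[X], q.natDegree ≤ m ∧ q.eval t = 1 ∧ q.eval s = 0 ∧
      MapsTo q.eval (Icc 0 w) (Icc 0 1) := by
  set α := -2 / w
  have hα : MapsTo (fun r => α * r + 1) (Icc 0 w) (Icc (-1) 1) := fun r ⟨hr₀, hr⟩ => by
    constructor <;> simp only [α] <;> field_simp <;> linarith
  have half_sub : ∀ r, (1 - (α * r + 1)) / 2 = r / w := fun r => by simp only [α]; ring
  obtain ⟨p, hp_deg, hp_t, hp_s, hp_maps⟩ :=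
    exists_poly_alternating_of_arccos_sep hm (hα ht) (hα hs) <| by
      refine le_trans ?_ (two_mul_abs_sqrt_sub_sqrt_le_abs_arccos_sub (hα ht) (hα hs))
      have hw' := sqrt_pos.mpr hw
      rw [half_sub, half_sub, sqrt_div' _ hw.le, sqrt_div' _ hw.le, ← sub_div, abs_div,
        abs_of_pos hw', abs_sub_comm]
      calc 2 * π / m = 2 * (π * √w / m) / √w := by field_simp
        _ ≤ 2 * |√s - √t| / √w := by gcongr
        _ = _ := by ring
  set e := p.eval (α * t + 1)
  have he : e * e = 1 := by rw [← abs_mul_abs_self, hp_t, one_mul]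
  refine ⟨C (1 / 2) + C (e / 2) * p.comp (C α * X + C 1), ?_, ?_, ?_, fun r hr => ?_⟩
  · exact (natDegree_add_le _ _).trans <| max_le (by simp) <|
      (natDegree_C_mul_le _ _).trans <| (natDegree_comp_linear_le _ _ _).trans hp_deg
  · simp only [eval_add, eval_mul, eval_C, eval_comp, eval_X]
    linarith
  · simp only [eval_add, eval_mul, eval_C, eval_comp, eval_X, hp_s]
    linarith
  · have := abs_le.mp <| (abs_mul e _).trans_le <|
      mul_le_one₀ hp_t.le (abs_nonneg _) (abs_le.mpr (hp_maps (hα hr)))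
    simp only [eval_add, eval_mul, eval_C, eval_comp, eval_X]
    constructor <;> linarith

theorem exists_mvPolynomial_eval_eq_eval_inner_sub {d : ℕ} (q : ℝ[X])
    (ξ : EuclideanSpace ℝ (Fin d)) (c : ℝ) :
    ∃ P : MvPolynomial (Fin d) ℝ, P.totalDegree ≤ q.natDegree ∧
      ∀ z : EuclideanSpace ℝ (Fin d),
        MvPolynomial.eval (fun i => z i) P = q.eval (⟪z, ξ⟫_ℝ - c) := by
  set L : MvPolynomial (Fin d) ℝ := ∑ i, ξ i • MvPolynomial.X i - MvPolynomial.C c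
  have hL : L.totalDegree ≤ 1 :=
    (MvPolynomial.totalDegree_sub_C_le _ _).trans <|
      (MvPolynomial.totalDegree_finsetSum _ _).trans <| Finset.sup_le fun i _ =>
        (MvPolynomial.totalDegree_smul_le _ _).trans (MvPolynomial.totalDegree_X i).le
  refine ⟨aeval L q, (MvPolynomial.totalDegree_aeval_polynomial_le q L).trans ?_, fun z => ?_⟩
  · simpa using Nat.mul_le_mul_left q.natDegree hL
  · rw [aeval_def, hom_eval₂, ← eval₂_id]
    congr 1
    · ext; simp
    · simp [L, PiLp.inner_apply]

theorem inner_sub_dubA_mem_Icc {d : ℕ} {Ω : Set (EuclideanSpace ℝ (Fin d))} {r : ℝ}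
    (hΩ : Ω ⊆ Metric.closedBall 0 r) {ξ z : EuclideanSpace ℝ (Fin d)} (hξ : ‖ξ‖ ≤ 1)
    (hz : z ∈ Ω) : ⟪z, ξ⟫_ℝ - dubA Ω ξ ∈ Icc 0 (2 * r) := by
  have hbound : ∀ w ∈ Ω, |⟪w, ξ⟫_ℝ| ≤ r := fun w hw =>
    (abs_real_inner_le_norm w ξ).trans <| (mul_le_of_le_one_right (norm_nonneg w) hξ).trans <|
      mem_closedBall_zero_iff.mp (hΩ hw)
  have hbdd : BddBelow ((fun w => ⟪w, ξ⟫_ℝ) '' Ω) :=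
    ⟨-r, forall_mem_image.mpr fun w hw => (abs_le.mp (hbound w hw)).1⟩
  have h_le : dubA Ω ξ ≤ ⟪z, ξ⟫_ℝ := csInf_le hbdd (mem_image_of_mem _ hz)
  have h_ge : -r ≤ dubA Ω ξ := le_csInf ((nonempty_of_mem hz).image _) <|
    forall_mem_image.mpr fun w hw => (abs_le.mp (hbound w hw)).1
  constructor <;> linarith [(abs_le.mp (hbound z hz)).2]

theorem exists_lt_of_lt_dubMetric {d : ℕ} (hd : 0 < d) {Ω : Set (EuclideanSpace ℝ (Fin d))}
    {x y : EuclideanSpace ℝ (Fin d)} {b : ℝ} (h : b < dubMetric Ω x y) :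
    ∃ ξ : EuclideanSpace ℝ (Fin d), ‖ξ‖ = 1 ∧
      b < |√(⟪x, ξ⟫_ℝ - dubA Ω ξ) - √(⟪y, ξ⟫_ℝ - dubA Ω ξ)| := by
  have : Nonempty (Fin d) := ⟨⟨0, hd⟩⟩
  have : Nonempty (Metric.sphere (0 : EuclideanSpace ℝ (Fin d)) 1) :=
    (NormedSpace.sphere_nonempty.mpr zero_le_one).to_subtype
  obtain ⟨ξ, hξ⟩ := exists_lt_of_lt_ciSup h
  exact ⟨ξ, mem_sphere_zero_iff_norm.mp ξ.2, hξ⟩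

theorem resolving_polynomial_general {d : ℕ} (hd : 1 ≤ d) (Ω : Set (EuclideanSpace ℝ (Fin d)))
    (h2 : Ω ⊆ Metric.closedBall (0 : EuclideanSpace ℝ (Fin d)) d)
    (n : ℕ) (hn : 2 ≤ n) (x y : EuclideanSpace ℝ (Fin d)) (hx : x ∈ Ω) (hy : y ∈ Ω)
    (hsep : 2 * Real.pi * Real.sqrt (2 * d) / (n - 1) ≤ dubMetric Ω x y) :
    ∃ P : MvPolynomial (Fin d) ℝ, P.totalDegree ≤ n ∧
      MvPolynomial.eval (fun i => y i) P = 1 ∧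
      MvPolynomial.eval (fun i => x i) P = 0 ∧
      ∀ z ∈ Ω, 0 ≤ MvPolynomial.eval (fun i => z i) P ∧
        MvPolynomial.eval (fun i => z i) P ≤ 1 := by
  have hm : 0 < n - 1 := by omega
  have hm_cast : ((n - 1 : ℕ) : ℝ) = n - 1 := Nat.cast_pred (by omega)
  have hn' : (0 : ℝ) < n - 1 := hm_cast ▸ Nat.cast_pos.mpr hm
  have hw : (0 : ℝ) < 2 * d := by positivity
  obtain ⟨ξ, hξ, hξ_sep⟩ := exists_lt_of_lt_dubMetric hd <| hsep.trans_lt' <|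
    show π * √(2 * d) / (n - 1) < 2 * π * √(2 * d) / (n - 1) by
      gcongr; linarith [pi_pos]
  have mem : ∀ z ∈ Ω, ⟪z, ξ⟫_ℝ - dubA Ω ξ ∈ Icc (0 : ℝ) (2 * d) := fun z hz =>
    inner_sub_dubA_mem_Icc h2 hξ.le hz
  obtain ⟨q, hq_deg, hq_y, hq_x, hq_maps⟩ := exists_poly_resolving_of_sqrt_sep hm hw
    (mem x hx) (mem y hy) (hm_cast ▸ hξ_sep.le)
  obtain ⟨P, hP_deg, hP_eval⟩ := exists_mvPolynomial_eval_eq_eval_inner_sub q ξ (dubA Ω ξ)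
  refine ⟨P, hP_deg.trans (hq_deg.trans (Nat.sub_le n 1)), by rw [hP_eval, hq_y],
    by rw [hP_eval, hq_x], fun z hz => ?_⟩
  rw [hP_eval]
  exact hq_maps (mem z hz)

theorem resolving_polynomial {d : ℕ} (hd : 1 ≤ d) (Ω : Set (EuclideanSpace ℝ (Fin d)))
    (hΩc : IsCompact Ω) (hΩconv : Convex ℝ Ω)
    (h1 : Metric.closedBall (0 : EuclideanSpace ℝ (Fin d)) 1 ⊆ Ω)
    (h2 : Ω ⊆ Metric.closedBall (0 : EuclideanSpace ℝ (Fin d)) d)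
    (n : ℕ) (hn : 2 ≤ n) (x y : EuclideanSpace ℝ (Fin d)) (hx : x ∈ Ω) (hy : y ∈ Ω)
    (hsep : 2 * Real.pi * Real.sqrt (2 * d) / (n - 1) ≤ dubMetric Ω x y) :
    ∃ P : MvPolynomial (Fin d) ℝ, P.totalDegree ≤ n ∧
      MvPolynomial.eval (fun i => y i) P = 1 ∧
      MvPolynomial.eval (fun i => x i) P = 0 ∧
      ∀ z ∈ Ω, 0 ≤ MvPolynomial.eval (fun i => z i) P ∧
        MvPolynomial.eval (fun i => z i) P ≤ 1 :=
  resolving_polynomial_general hd Ω h2 n hn x y hx hy hsep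
end
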